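/- arXiv:1101.2570 — 6 statements merged into one kernel-verified Lean document; each statement's English description precedes it below -/
import Mathlib

section
/- Assume s₀ ≥ 1. Let (p_n)_{n≥0} be a sequence of real numbers satisfying p_n = (1/μ)·n·log n + c_p·n + o(n) for some constant c_p ∈ ℝ, and let (w_n)_{n≥0} be a sequence of real numbers with w_n = O(n²·log n) such that, for some n* and all n ≥ n*, w_n = b·Σ_{k=0}^{n−s₀} P(I_n = k)·(w_k + (n−k)·p_k + k·(n−k)). Then there exists a constant c_w ∈ ℝ such that w_n = (1/μ)·n²·log n + c_w·n² + o(n²) as n → ∞. -/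
open MeasureTheory Filter Topology Asymptotics

/-!
Write `w n = (1/μ) n² log n + c n² + r n` with `q = b E[V²]` and `c = c_p + 1 - 1 / (1 - q)`, so
that `r n = b E[r (I n)] + e n`. Splitting the summand as
`(1/μ) n log n · k + n² ψ(k/n) + (n - k) ρ k` with `ρ k = o(k)`, the defect `e n` is `o(n²)`:
the `n² log n` terms cancel because `b E[I n] = n - s₀`, and `b E[ψ(I n / n)] → b E[ψ(V)]`
because, given `V`, `I n - s₁` is binomial and Bernstein approximation applies; `c` is exactly
the value making this limit equal to `c`.
Since `V` has a density, `V² < V` almost surely, so `q < 1` and `b E[(I n)²] ≤ θ n²` eventually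
for some `θ < 1`. A strong induction then bounds `|r n| ≤ η n² + D n + D₀` for every `η > 0`.
-/

lemma abs_add_div_sub_div_le {j m s t : ℕ} (hj : j ≤ m) (hst : s ≤ t) :
    |((j : ℝ) + s) / (m + t) - j / m| ≤ t / (m + t) := by
  rcases Nat.eq_zero_or_pos m with rfl | hm
  · obtain rfl : j = 0 := by omega
    simp only [CharP.cast_eq_zero, zero_add, div_zero, sub_zero]
    rw [abs_div, abs_of_nonneg (Nat.cast_nonneg _), abs_of_nonneg (Nat.cast_nonneg _)]
    gcongr
  · have hm' : (0 : ℝ) < m := by exact_mod_cast hm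
    have hj' : (j : ℝ) ≤ m := by exact_mod_cast hj
    have hst' : (s : ℝ) ≤ t := by exact_mod_cast hst
    have ht : (0 : ℝ) ≤ t := Nat.cast_nonneg t
    have hs : (0 : ℝ) ≤ s := Nat.cast_nonneg s
    have hmt : (0 : ℝ) < (m + t) * m := by positivity
    rw [show ((j : ℝ) + s) / (m + t) - j / m = (s * m - t * j) / ((m + t) * m) by
        field_simp; ring,
      show (t : ℝ) / (m + t) = t * m / ((m + t) * m) by field_simp,
      abs_div, abs_of_pos hmt]
    gcongr
    rw [abs_le]
    constructor <;> nlinarith [mul_nonneg (Nat.cast_nonneg (α := ℝ) j) ht]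

lemma add_div_mem_Icc {j m s t : ℕ} (hj : j ≤ m) (hst : s ≤ t) :
    ((j : ℝ) + s) / (m + t) ∈ Set.Icc (0 : ℝ) 1 := by
  refine ⟨by positivity, div_le_one_of_le₀ ?_ (by positivity)⟩
  exact_mod_cast Nat.add_le_add hj hst

lemma div_mem_Icc {j m : ℕ} (hj : j ≤ m) : (j : ℝ) / m ∈ Set.Icc (0 : ℝ) 1 :=
  ⟨by positivity, div_le_one_of_le₀ (by exact_mod_cast hj) (by positivity)⟩

lemma bernsteinPolynomial_eval (m j : ℕ) (x : ℝ) :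
    (bernsteinPolynomial ℝ m j).eval x = (m.choose j : ℝ) * x ^ j * (1 - x) ^ (m - j) := by
  simp [bernsteinPolynomial]

lemma bernsteinPolynomial_eval_nonneg (m j : ℕ) {x : ℝ} (hx : x ∈ Set.Icc (0 : ℝ) 1) :
    0 ≤ (bernsteinPolynomial ℝ m j).eval x := by
  rw [bernsteinPolynomial_eval]
  have := hx.1
  have := sub_nonneg.mpr hx.2
  positivity

lemma sum_bernsteinPolynomial_eval (m : ℕ) (x : ℝ) :
    ∑ j ∈ Finset.range (m + 1), (bernsteinPolynomial ℝ m j).eval x = 1 := by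
  simpa [Polynomial.eval_finsetSum] using congrArg (Polynomial.eval x) (bernsteinPolynomial.sum ℝ m)

lemma sum_mul_bernsteinPolynomial_eval (m : ℕ) (x : ℝ) :
    ∑ j ∈ Finset.range (m + 1), (j : ℝ) * (bernsteinPolynomial ℝ m j).eval x = m * x := by
  simpa [Polynomial.eval_finsetSum] using
    congrArg (Polynomial.eval x) (bernsteinPolynomial.sum_smul ℝ m)

lemma abs_sum_bernsteinPolynomial_eval_mul_le {m : ℕ} {x ε : ℝ} (hx : x ∈ Set.Icc (0 : ℝ) 1)
    {f : ℕ → ℝ} (hf : ∀ j ≤ m, |f j| ≤ ε) :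
    |∑ j ∈ Finset.range (m + 1), (bernsteinPolynomial ℝ m j).eval x * f j| ≤ ε := by
  calc |∑ j ∈ Finset.range (m + 1), (bernsteinPolynomial ℝ m j).eval x * f j|
      ≤ ∑ j ∈ Finset.range (m + 1), (bernsteinPolynomial ℝ m j).eval x * ε := by
        refine (Finset.abs_sum_le_sum_abs _ _).trans (Finset.sum_le_sum fun j hj => ?_)
        rw [abs_mul, abs_of_nonneg (bernsteinPolynomial_eval_nonneg m j hx)]
        exact mul_le_mul_of_nonneg_left (hf j (Finset.mem_range_succ_iff.mp hj))
          (bernsteinPolynomial_eval_nonneg m j hx)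
    _ = ε := by rw [← Finset.sum_mul, sum_bernsteinPolynomial_eval, one_mul]

lemma tendstoUniformlyOn_bernstein {φ : ℝ → ℝ} (hφ : Continuous φ) :
    TendstoUniformlyOn
      (fun m x => ∑ j ∈ Finset.range (m + 1), (bernsteinPolynomial ℝ m j).eval x * φ (j / m))
      φ atTop (Set.Icc 0 1) := by
  let φI : C(unitInterval, ℝ) := ⟨fun y => φ y, hφ.comp continuous_subtype_val⟩
  have h := ContinuousMap.tendsto_iff_tendstoUniformly.mp (bernsteinApproximation_uniform φI)
  rw [tendstoUniformlyOn_iff_tendstoUniformly_comp_coe]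
  convert h using 1
  · funext m x
    rw [bernsteinApproximation.apply, ← Fin.sum_univ_eq_sum_range]
    refine Finset.sum_congr rfl fun j _ => ?_
    simp [φI, bernstein, bernstein.z, smul_eq_mul]
  · rfl

lemma tendstoUniformlyOn_bernstein_shift {φ : ℝ → ℝ} (hφ : Continuous φ) {s t : ℕ}
    (hst : s ≤ t) :
    TendstoUniformlyOn
      (fun n x => ∑ j ∈ Finset.range (n - t + 1),
        (bernsteinPolynomial ℝ (n - t) j).eval x * φ ((j + s) / n))
      φ atTop (Set.Icc 0 1) := by
  rw [Metric.tendstoUniformlyOn_iff]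
  intro ε hε
  obtain ⟨δ, hδ, hφδ⟩ := Metric.uniformContinuousOn_iff_le.mp
    (isCompact_Icc.uniformContinuousOn_of_continuous hφ.continuousOn) (ε / 2) (half_pos hε)
  have hbern := (tendsto_sub_atTop_nat t).eventually
    (Metric.tendstoUniformlyOn_iff.mp (tendstoUniformlyOn_bernstein hφ) (ε / 2) (half_pos hε))
  have hsmall : ∀ᶠ n : ℕ in atTop, (t : ℝ) / n < δ :=
    (tendsto_const_div_atTop_nhds_zero_nat (t : ℝ)).eventually (gt_mem_nhds hδ)
  filter_upwards [hbern, hsmall, eventually_ge_atTop t] with n hbern hsmall hnt x hx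
  set m := n - t
  have hn : (n : ℝ) = m + t := by rw [← Nat.cast_add, Nat.sub_add_cancel hnt]
  have hshift : |∑ j ∈ Finset.range (m + 1), (bernsteinPolynomial ℝ m j).eval x *
      (φ ((j + s) / n) - φ (j / m))| ≤ ε / 2 := by
    refine abs_sum_bernsteinPolynomial_eval_mul_le hx fun j hj => ?_
    rw [← Real.dist_eq, hn]
    refine hφδ _ (add_div_mem_Icc hj hst) _ (div_mem_Icc hj) ?_
    rw [Real.dist_eq]
    exact ((abs_add_div_sub_div_le hj hst).trans_lt (by rwa [hn] at hsmall)).le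
  simp_rw [mul_sub] at hshift
  rw [Finset.sum_sub_distrib, ← Real.dist_eq, dist_comm] at hshift
  calc _ ≤ _ := dist_triangle _ _ _
    _ < ε / 2 + ε / 2 := add_lt_add_of_lt_of_le (hbern x hx) hshift
    _ = ε := add_halves ε

section Integrals

variable {Ω : Type*} [MeasurableSpace Ω] {ℙ : Measure Ω} {V : Ω → ℝ}

lemma integrable_comp_of_mem_Icc [IsFiniteMeasure ℙ] (hV : Measurable V)
    (hV01 : ∀ ω, V ω ∈ Set.Icc (0 : ℝ) 1) {φ : ℝ → ℝ} (hφ : Continuous φ) :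
    Integrable (fun ω => φ (V ω)) ℙ := by
  obtain ⟨C, hC⟩ := isCompact_Icc.exists_bound_of_continuousOn hφ.continuousOn
  exact Integrable.of_bound (hφ.measurable.comp hV).aestronglyMeasurable C
    (ae_of_all _ fun ω => hC _ (hV01 ω))

lemma tendsto_integral_comp_of_tendstoUniformlyOn [IsProbabilityMeasure ℙ] {ι : Type*}
    {l : Filter ι} {F : ι → ℝ → ℝ} {φ : ℝ → ℝ} {S : Set ℝ} (hF : TendstoUniformlyOn F φ l S)
    (hV : ∀ ω, V ω ∈ S) (hFi : ∀ i, Integrable (fun ω => F i (V ω)) ℙ)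
    (hφi : Integrable (fun ω => φ (V ω)) ℙ) :
    Tendsto (fun i => ∫ ω, F i (V ω) ∂ℙ) l (𝓝 (∫ ω, φ (V ω) ∂ℙ)) := by
  rw [Metric.tendsto_nhds]
  intro ε hε
  filter_upwards [Metric.tendstoUniformlyOn_iff.mp hF (ε / 2) (half_pos hε)] with i hi
  rw [dist_eq_norm, ← integral_sub (hFi i) hφi]
  refine (norm_integral_le_of_norm_le_const (C := ε / 2) (ae_of_all _ fun ω => ?_)).trans_lt ?_
  · rw [← dist_eq_norm, dist_comm]
    exact (hi _ (hV ω)).le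
  · simp [half_lt_self hε]

lemma integral_sq_lt_integral [IsProbabilityMeasure ℙ] (hV : Measurable V)
    (hV01 : ∀ ω, V ω ∈ Set.Icc (0 : ℝ) 1) (hdens : ℙ.map V ≪ volume) :
    ∫ ω, V ω ^ 2 ∂ℙ < ∫ ω, V ω ∂ℙ := by
  have hatoms : ℙ (V ⁻¹' {0, 1}) = 0 := by
    rw [← Measure.map_apply hV (by measurability)]
    exact hdens ((Set.toFinite _).measure_zero _)
  have hpos : ∀ᵐ ω ∂ℙ, 0 < V ω - V ω ^ 2 := by
    filter_upwards [measure_eq_zero_iff_ae_notMem.mp hatoms] with ω hω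
    simp only [Set.mem_preimage, Set.mem_insert_iff, Set.mem_singleton_iff, not_or] at hω
    have h0 : 0 < V ω := lt_of_le_of_ne (hV01 ω).1 (Ne.symm hω.1)
    have h1 : V ω < 1 := lt_of_le_of_ne (hV01 ω).2 hω.2
    nlinarith
  have hint : Integrable (fun ω => V ω - V ω ^ 2) ℙ :=
    integrable_comp_of_mem_Icc hV hV01 (by fun_prop : Continuous fun x : ℝ => x - x ^ 2)
  have : 0 < ∫ ω, V ω - V ω ^ 2 ∂ℙ := by
    rw [integral_pos_iff_support_of_nonneg_ae (hpos.mono fun ω h => h.le) hint,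
      pos_iff_ne_zero]
    intro hzero
    obtain ⟨ω, hω0, hωpos⟩ := ((ae_iff.mpr hzero).and hpos).exists
    exact hωpos.ne' hω0
  have hV1 : Integrable V ℙ := integrable_comp_of_mem_Icc hV hV01 continuous_id
  rw [integral_sub hV1 (integrable_comp_of_mem_Icc hV hV01 (continuous_pow 2))] at this
  linarith

end Integrals

section SubtreeSize

variable {Ω : Type*} [MeasurableSpace Ω] {ℙ : Measure Ω}

lemma measureReal_preimage_singleton_eq_zero [IsProbabilityMeasure ℙ] {β : Type*}
    [MeasurableSpace β] [MeasurableSingletonClass β] [DecidableEq β] {f : Ω → β}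
    (hf : Measurable f) {T : Finset β}
    (hT : ∑ y ∈ T, ℙ.real (f ⁻¹' {y}) = 1) {y : β} (hy : y ∉ T) : ℙ.real (f ⁻¹' {y}) = 0 := by
  have hle := measureReal_le_one (μ := ℙ) (s := f ⁻¹' ↑(insert y T))
  rw [← sum_measureReal_preimage_singleton _ fun z _ => hf (measurableSet_singleton z),
    Finset.sum_insert hy, hT] at hle
  linarith [measureReal_nonneg (μ := ℙ) (s := f ⁻¹' {y})]

structure IsFirstSubtreeSize (ℙ : Measure Ω) (V : Ω → ℝ) (I : ℕ → Ω → ℕ) (b s₀ s₁ : ℕ) :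
    Prop where
  pos : 0 < b
  measurable_V : Measurable V
  mem_Icc : ∀ ω, V ω ∈ Set.Icc (0 : ℝ) 1
  measurable_I : ∀ n, Measurable (I n)
  law : ∀ n : ℕ, s₀ + b * s₁ ≤ n → ∀ k : ℕ, k ≤ n - s₀ - b * s₁ →
    (ℙ {ω | I n ω = k + s₁}).toReal
      = ∫ ω, ((n - s₀ - b * s₁).choose k : ℝ) * V ω ^ k * (1 - V ω) ^ (n - s₀ - b * s₁ - k) ∂ℙ

noncomputable def subtreeWeight (ℙ : Measure Ω) (I : ℕ → Ω → ℕ) (b n k : ℕ) : ℝ :=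
  b * (ℙ {ω | I n ω = k}).toReal

variable {V : Ω → ℝ} {I : ℕ → Ω → ℕ} {b s₀ s₁ : ℕ}

lemma subtreeWeight_nonneg (n k : ℕ) : 0 ≤ subtreeWeight ℙ I b n k := by
  unfold subtreeWeight
  positivity

lemma sum_subtreeWeight_mul (n : ℕ) (f : ℕ → ℝ) :
    ∑ k ∈ Finset.range (n - s₀ + 1), subtreeWeight ℙ I b n k * f k
      = b * ∑ k ∈ Finset.range (n - s₀ + 1), (ℙ {ω | I n ω = k}).toReal * f k := by
  simp only [subtreeWeight, mul_assoc, Finset.mul_sum]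

namespace IsFirstSubtreeSize

variable [IsProbabilityMeasure ℙ]

lemma sum_mul_eq_integral (h : IsFirstSubtreeSize ℙ V I b s₀ s₁) {n : ℕ} (hn : s₀ + b * s₁ ≤ n)
    (f : ℕ → ℝ) :
    ∑ k ∈ Finset.range (n - s₀ + 1), (ℙ {ω | I n ω = k}).toReal * f k
      = ∫ ω, ∑ j ∈ Finset.range (n - (s₀ + b * s₁) + 1),
          (bernsteinPolynomial ℝ (n - (s₀ + b * s₁)) j).eval (V ω) * f (j + s₁) ∂ℙ := by
  set m := n - (s₀ + b * s₁)
  have hB : ∀ j ∈ Finset.range (m + 1),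
      (ℙ {ω | I n ω = j + s₁}).toReal = ∫ ω, (bernsteinPolynomial ℝ m j).eval (V ω) ∂ℙ := by
    intro j hj
    rw [h.law n hn j (by have := Finset.mem_range_succ_iff.mp hj; omega)]
    simp only [bernsteinPolynomial_eval, Nat.sub_sub, m]
  have hBi : ∀ j, Integrable (fun ω => (bernsteinPolynomial ℝ m j).eval (V ω)) ℙ :=
    fun j => integrable_comp_of_mem_Icc h.measurable_V h.mem_Icc (Polynomial.continuous _)
  have hinj : Set.InjOn (· + s₁) (Finset.range (m + 1) : Set ℕ) :=
    fun _ _ _ _ h => Nat.add_right_cancel h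
  have htotal : ∑ k ∈ (Finset.range (m + 1)).image (· + s₁), ℙ.real (I n ⁻¹' {k}) = 1 := by
    rw [Finset.sum_image hinj]
    change ∑ j ∈ Finset.range (m + 1), (ℙ {ω | I n ω = j + s₁}).toReal = 1
    rw [Finset.sum_congr rfl hB, ← integral_finsetSum _ fun j _ => hBi j]
    simp [sum_bernsteinPolynomial_eval]
  have hsupp : (Finset.range (m + 1)).image (· + s₁) ⊆ Finset.range (n - s₀ + 1) := by
    have : s₁ ≤ b * s₁ := Nat.le_mul_of_pos_left s₁ h.pos
    intro k
    simp only [Finset.mem_image, Finset.mem_range]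
    omega
  -- the values `j + s₁` already carry full mass
  have hnull : ∀ k ∉ (Finset.range (m + 1)).image (· + s₁), (ℙ {ω | I n ω = k}).toReal = 0 :=
    fun k hk => measureReal_preimage_singleton_eq_zero (h.measurable_I n) htotal hk
  rw [← Finset.sum_subset hsupp fun k _ hk => by rw [hnull k hk, zero_mul],
    Finset.sum_image hinj, integral_finsetSum _ fun j _ => (hBi j).mul_const _]
  exact Finset.sum_congr rfl fun j hj => by rw [hB j hj, integral_mul_const]

lemma sum_subtreeWeight (h : IsFirstSubtreeSize ℙ V I b s₀ s₁) {n : ℕ} (hn : s₀ + b * s₁ ≤ n) :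
    ∑ k ∈ Finset.range (n - s₀ + 1), subtreeWeight ℙ I b n k = b := by
  have htotal := h.sum_mul_eq_integral hn fun _ => 1
  simp only [mul_one, sum_bernsteinPolynomial_eval, integral_const, probReal_univ, smul_eq_mul]
    at htotal
  simp only [subtreeWeight, ← Finset.mul_sum, htotal, mul_one]

lemma sum_subtreeWeight_mul_self (h : IsFirstSubtreeSize ℙ V I b s₀ s₁)
    (hEV : ∫ ω, V ω ∂ℙ = 1 / b) {n : ℕ} (hn : s₀ + b * s₁ ≤ n) :
    ∑ k ∈ Finset.range (n - s₀ + 1), subtreeWeight ℙ I b n k * k = n - s₀ := by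
  rw [sum_subtreeWeight_mul, h.sum_mul_eq_integral hn]
  set m := n - (s₀ + b * s₁)
  have hmean : ∀ x : ℝ, ∑ j ∈ Finset.range (m + 1),
      (bernsteinPolynomial ℝ m j).eval x * ((j + s₁ : ℕ) : ℝ) = m * x + s₁ := by
    intro x
    calc _ = ∑ j ∈ Finset.range (m + 1), ((j : ℝ) * (bernsteinPolynomial ℝ m j).eval x
          + s₁ * (bernsteinPolynomial ℝ m j).eval x) :=
          Finset.sum_congr rfl fun j _ => by push_cast; ring
      _ = m * x + s₁ := by
          rw [Finset.sum_add_distrib, ← Finset.mul_sum, sum_mul_bernsteinPolynomial_eval,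
            sum_bernsteinPolynomial_eval, mul_one]
  have hV1 : Integrable V ℙ := integrable_comp_of_mem_Icc h.measurable_V h.mem_Icc continuous_id
  simp only [hmean]
  rw [integral_add (hV1.const_mul _) (integrable_const _), integral_const_mul, hEV]
  have hm : (m : ℝ) = n - (s₀ + b * s₁) := by rw [Nat.cast_sub hn]; push_cast; ring
  have hb : (b : ℝ) ≠ 0 := by exact_mod_cast h.pos.ne'
  simp only [integral_const, probReal_univ, smul_eq_mul, one_mul, hm]
  field_simp
  ring

lemma tendsto_sum_subtreeWeight_mul (h : IsFirstSubtreeSize ℙ V I b s₀ s₁) {φ : ℝ → ℝ}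
    (hφ : Continuous φ) :
    Tendsto (fun n : ℕ => ∑ k ∈ Finset.range (n - s₀ + 1), subtreeWeight ℙ I b n k * φ (k / n))
      atTop (𝓝 (b * ∫ ω, φ (V ω) ∂ℙ)) := by
  have hst : s₁ ≤ s₀ + b * s₁ := (Nat.le_mul_of_pos_left s₁ h.pos).trans (Nat.le_add_left _ _)
  have hint : ∀ {ψ : ℝ → ℝ}, Continuous ψ → Integrable (fun ω => ψ (V ω)) ℙ :=
    integrable_comp_of_mem_Icc h.measurable_V h.mem_Icc
  refine ((tendsto_integral_comp_of_tendstoUniformlyOn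
    (tendstoUniformlyOn_bernstein_shift hφ hst) h.mem_Icc
    (fun n => hint (continuous_finsetSum _ fun j _ =>
      (Polynomial.continuous _).mul continuous_const))
    (hint hφ)).const_mul (b : ℝ)).congr' ?_
  filter_upwards [eventually_ge_atTop (s₀ + b * s₁)] with n hn
  rw [sum_subtreeWeight_mul, h.sum_mul_eq_integral hn]
  push_cast
  rfl

end IsFirstSubtreeSize

end SubtreeSize

section Recursion

lemma exists_abs_le_mul_add_of_isLittleO {f g : ℕ → ℝ} (h : f =o[atTop] g) {ε : ℝ}
    (hε : 0 < ε) : ∃ C, 0 ≤ C ∧ ∀ n, |f n| ≤ ε * |g n| + C := by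
  obtain ⟨N, hN⟩ := eventually_atTop.mp (h.bound hε)
  refine ⟨∑ k ∈ Finset.range N, |f k|, by positivity, fun n => ?_⟩
  by_cases hn : n < N
  · have := Finset.single_le_sum (fun k _ => abs_nonneg (f k)) (Finset.mem_range.mpr hn)
    nlinarith [abs_nonneg (g n)]
  · have := hN n (not_lt.mp hn)
    simp only [Real.norm_eq_abs] at this
    linarith [Finset.sum_nonneg fun k (_ : k ∈ Finset.range N) => abs_nonneg (f k)]

variable {s₀ : ℕ} {a : ℕ → ℕ → ℝ}

lemma isLittleO_sum_mul_sub_mul (ha : ∀ n k, 0 ≤ a n k) {β : ℝ}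
    (hmass : ∀ᶠ n in atTop, ∑ k ∈ Finset.range (n - s₀ + 1), a n k ≤ β)
    (hmean : ∀ᶠ n : ℕ in atTop, ∑ k ∈ Finset.range (n - s₀ + 1), a n k * k ≤ n)
    {ρ : ℕ → ℝ} (hρ : ρ =o[atTop] fun k : ℕ => (k : ℝ)) :
    (fun n : ℕ => ∑ k ∈ Finset.range (n - s₀ + 1), a n k * ((n - k) * ρ k))
      =o[atTop] fun n : ℕ => (n : ℝ) ^ 2 := by
  rw [isLittleO_iff]
  intro ε hε
  obtain ⟨C, hC0, hC⟩ := exists_abs_le_mul_add_of_isLittleO hρ (half_pos hε)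
  have hlin : ∀ᶠ n : ℕ in atTop, β * C ≤ ε / 2 * n :=
    (tendsto_natCast_atTop_atTop.const_mul_atTop (half_pos hε)).eventually_ge_atTop _
  filter_upwards [hmass, hmean, hlin] with n hmass hmean hlin
  have hterm : ∀ k ∈ Finset.range (n - s₀ + 1),
      |a n k * ((n - k) * ρ k)| ≤ n * (ε / 2 * (a n k * k) + C * a n k) := by
    intro k hk
    have hkn : (k : ℝ) ≤ n := by
      exact_mod_cast (Finset.mem_range_succ_iff.mp hk).trans (Nat.sub_le n s₀)
    have hρk := hC k
    rw [Nat.abs_cast] at hρk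
    rw [abs_mul, abs_mul, abs_of_nonneg (ha n k), abs_of_nonneg (sub_nonneg.mpr hkn)]
    have : (n - k : ℝ) * |ρ k| ≤ n * (ε / 2 * k + C) :=
      mul_le_mul (by linarith [Nat.cast_nonneg (α := ℝ) k]) hρk (abs_nonneg _) (by positivity)
    nlinarith [ha n k]
  rw [Real.norm_eq_abs, Real.norm_eq_abs, abs_of_nonneg (by positivity : (0 : ℝ) ≤ (n : ℝ) ^ 2)]
  calc _ ≤ ∑ k ∈ Finset.range (n - s₀ + 1), n * (ε / 2 * (a n k * k) + C * a n k) :=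
        (Finset.abs_sum_le_sum_abs _ _).trans (Finset.sum_le_sum hterm)
    _ = n * (ε / 2 * ∑ k ∈ Finset.range (n - s₀ + 1), a n k * k
          + C * ∑ k ∈ Finset.range (n - s₀ + 1), a n k) := by
        rw [Finset.mul_sum, Finset.mul_sum, ← Finset.sum_add_distrib, Finset.mul_sum]
    _ ≤ n * (ε / 2 * n + ε / 2 * n) := by
        have hmassC : C * ∑ k ∈ Finset.range (n - s₀ + 1), a n k ≤ ε / 2 * n := by
          nlinarith [mul_le_mul_of_nonneg_left hmass hC0]
        exact mul_le_mul_of_nonneg_left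
          (add_le_add (mul_le_mul_of_nonneg_left hmean (half_pos hε).le) hmassC) (Nat.cast_nonneg n)
    _ = ε * n ^ 2 := by ring

lemma abs_le_mul_sq_add_of_recursion (hs₀ : 1 ≤ s₀) (ha : ∀ n k, 0 ≤ a n k) {β θ η : ℝ} (hη : 0 ≤ η)
    {r e : ℕ → ℝ} {N : ℕ}
    (hN : ∀ n, N ≤ n → 1 ≤ n ∧ r n = ∑ k ∈ Finset.range (n - s₀ + 1), a n k * r k + e n ∧
      ∑ k ∈ Finset.range (n - s₀ + 1), a n k ≤ β ∧
      ∑ k ∈ Finset.range (n - s₀ + 1), a n k * k ≤ n - s₀ ∧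
      ∑ k ∈ Finset.range (n - s₀ + 1), a n k * k ^ 2 ≤ θ * n ^ 2 ∧
      |e n| ≤ (1 - θ) * η * n ^ 2) (n : ℕ) :
    |r n| ≤ η * n ^ 2 + |β| * (∑ k ∈ Finset.range N, |r k|) * n
      + ∑ k ∈ Finset.range N, |r k| := by
  set D₀ := ∑ k ∈ Finset.range N, |r k|
  have hD₀ : 0 ≤ D₀ := by positivity
  -- The constant `D₀` is multiplied by the mass `β` at each step; the linear term absorbs the
  -- excess because the first moment `n - s₀` falls short of `n` by `s₀ ≥ 1`.
  set D := |β| * D₀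
  induction n using Nat.strong_induction_on with
  | _ n ih =>
  by_cases hn : n < N
  · have := Finset.single_le_sum (fun k _ => abs_nonneg (r k)) (Finset.mem_range.mpr hn)
    have : 0 ≤ D * n := by positivity
    nlinarith
  obtain ⟨hn1, hrec, hmass, hmean, hsq, he⟩ := hN n (not_lt.mp hn)
  have hs₀' : (1 : ℝ) ≤ s₀ := by exact_mod_cast hs₀
  calc |r n| ≤ ∑ k ∈ Finset.range (n - s₀ + 1), a n k * |r k| + |e n| := by
        rw [hrec]
        refine (abs_add_le _ _).trans (add_le_add_left ?_ _)
        refine (Finset.abs_sum_le_sum_abs _ _).trans_eq (Finset.sum_congr rfl fun k _ => ?_)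
        rw [abs_mul, abs_of_nonneg (ha n k)]
    _ ≤ ∑ k ∈ Finset.range (n - s₀ + 1), a n k * (η * k ^ 2 + D * k + D₀) + |e n| := by
        gcongr with k hk
        · exact ha n k
        · exact ih k (by have := Finset.mem_range_succ_iff.mp hk; omega)
    _ = η * ∑ k ∈ Finset.range (n - s₀ + 1), a n k * k ^ 2
          + D * ∑ k ∈ Finset.range (n - s₀ + 1), a n k * k
          + D₀ * ∑ k ∈ Finset.range (n - s₀ + 1), a n k + |e n| := by
        rw [Finset.mul_sum, Finset.mul_sum, Finset.mul_sum, ← Finset.sum_add_distrib,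
          ← Finset.sum_add_distrib]
        exact congrArg (· + _) (Finset.sum_congr rfl fun k _ => by ring)
    _ ≤ η * (θ * n ^ 2) + D * (n - s₀) + D₀ * β + (1 - θ) * η * n ^ 2 := by
        gcongr
    _ ≤ η * n ^ 2 + D * n + D₀ := by
        have : D₀ * β - D₀ ≤ D * s₀ := by
          nlinarith [le_abs_self β, mul_nonneg hD₀ (abs_nonneg β)]
        nlinarith

lemma eventually_sum_mul_sq_le {q θ : ℝ}
    (hsq : Tendsto (fun n : ℕ => ∑ k ∈ Finset.range (n - s₀ + 1), a n k * ((k : ℝ) / n) ^ 2)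
      atTop (𝓝 q)) (hqθ : q < θ) :
    ∀ᶠ n : ℕ in atTop, ∑ k ∈ Finset.range (n - s₀ + 1), a n k * k ^ 2 ≤ θ * n ^ 2 := by
  filter_upwards [hsq.eventually (eventually_le_nhds hqθ), eventually_ge_atTop 1] with n h hn
  have hn' : (n : ℝ) ≠ 0 := by positivity
  calc _ = n ^ 2 * ∑ k ∈ Finset.range (n - s₀ + 1), a n k * ((k : ℝ) / n) ^ 2 := by
        rw [Finset.mul_sum]
        exact Finset.sum_congr rfl fun k _ => by field_simp
    _ ≤ θ * n ^ 2 := by rw [mul_comm θ]; exact mul_le_mul_of_nonneg_left h (by positivity)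

theorem isLittleO_sq_of_recursion (hs₀ : 1 ≤ s₀) (ha : ∀ n k, 0 ≤ a n k) {β q : ℝ} (hq : q < 1)
    (hmass : ∀ᶠ n in atTop, ∑ k ∈ Finset.range (n - s₀ + 1), a n k ≤ β)
    (hmean : ∀ᶠ n : ℕ in atTop, ∑ k ∈ Finset.range (n - s₀ + 1), a n k * k ≤ n - s₀)
    (hsq : Tendsto (fun n : ℕ => ∑ k ∈ Finset.range (n - s₀ + 1), a n k * ((k : ℝ) / n) ^ 2)
      atTop (𝓝 q))
    {r e : ℕ → ℝ} (he : e =o[atTop] fun n : ℕ => (n : ℝ) ^ 2)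
    (hrec : ∀ᶠ n in atTop, r n = ∑ k ∈ Finset.range (n - s₀ + 1), a n k * r k + e n) :
    r =o[atTop] fun n : ℕ => (n : ℝ) ^ 2 := by
  obtain ⟨θ, hqθ, hθ1⟩ := exists_between hq
  have hsq' := eventually_sum_mul_sq_le hsq hqθ
  rw [isLittleO_iff]
  intro ε hε
  have hev : ∀ᶠ n in atTop, 1 ≤ n ∧
      r n = ∑ k ∈ Finset.range (n - s₀ + 1), a n k * r k + e n ∧
      ∑ k ∈ Finset.range (n - s₀ + 1), a n k ≤ β ∧
      ∑ k ∈ Finset.range (n - s₀ + 1), a n k * k ≤ n - s₀ ∧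
      ∑ k ∈ Finset.range (n - s₀ + 1), a n k * k ^ 2 ≤ θ * n ^ 2 ∧
      |e n| ≤ (1 - θ) * (ε / 2) * n ^ 2 := by
    filter_upwards [eventually_ge_atTop 1, hrec, hmass, hmean, hsq',
      he.bound (show 0 < (1 - θ) * (ε / 2) by nlinarith)] with n h1 h2 h3 h4 h5 h6
    rw [Real.norm_eq_abs, Real.norm_eq_abs,
      abs_of_nonneg (by positivity : (0 : ℝ) ≤ (n : ℝ) ^ 2)] at h6
    exact ⟨h1, h2, h3, h4, h5, h6⟩
  obtain ⟨N, hN⟩ := eventually_atTop.mp hev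
  have hbound := abs_le_mul_sq_add_of_recursion hs₀ ha (half_pos hε).le hN
  set D₀ := ∑ k ∈ Finset.range N, |r k|
  have hlin : ∀ᶠ n : ℕ in atTop, |β| * D₀ + D₀ ≤ ε / 2 * n :=
    (tendsto_natCast_atTop_atTop.const_mul_atTop (half_pos hε)).eventually_ge_atTop _
  filter_upwards [hlin, eventually_ge_atTop 1] with n hlin hn
  have hn' : (1 : ℝ) ≤ n := by exact_mod_cast hn
  have hD₀ : 0 ≤ D₀ := by positivity
  rw [Real.norm_eq_abs, Real.norm_eq_abs, abs_of_nonneg (by positivity : (0 : ℝ) ≤ (n : ℝ) ^ 2)]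
  nlinarith [hbound n]

end Recursion

section Defect

open Real

noncomputable def wienerProfile (α c cp x : ℝ) : ℝ :=
  α * (x * log x) + c * x ^ 2 + (cp + 1) * (x * (1 - x))

lemma continuous_wienerProfile (α c cp : ℝ) : Continuous (wienerProfile α c cp) := by
  unfold wienerProfile
  fun_prop

lemma summand_eq_wienerProfile (α c cp : ℝ) (p : ℕ → ℝ) {n : ℕ} (hn : n ≠ 0) (k : ℕ) :
    α * k ^ 2 * log k + c * k ^ 2 + (n - k) * p k + k * (n - k)
      = α * n * log n * k + n ^ 2 * wienerProfile α c cp (k / n)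
        + (n - k) * (p k - α * k * log k - cp * k) := by
  have hn' : (n : ℝ) ≠ 0 := by exact_mod_cast hn
  unfold wienerProfile
  rcases eq_or_ne k 0 with rfl | hk
  · simp
  · rw [log_div (by exact_mod_cast hk) hn']
    field_simp
    ring

variable {s₀ : ℕ} {a : ℕ → ℕ → ℝ}

lemma isLittleO_recursion_defect (ha : ∀ n k, 0 ≤ a n k) {α β c cp : ℝ} {p : ℕ → ℝ}
    (hp : (fun n : ℕ => p n - α * n * log n - cp * n) =o[atTop] fun n : ℕ => (n : ℝ))
    (hmass : ∀ᶠ n in atTop, ∑ k ∈ Finset.range (n - s₀ + 1), a n k ≤ β)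
    (hmean : ∀ᶠ n : ℕ in atTop, ∑ k ∈ Finset.range (n - s₀ + 1), a n k * k = n - s₀)
    (hprofile : Tendsto (fun n : ℕ => ∑ k ∈ Finset.range (n - s₀ + 1),
      a n k * wienerProfile α c cp (k / n)) atTop (𝓝 c)) :
    (fun n : ℕ => ∑ k ∈ Finset.range (n - s₀ + 1),
        a n k * (α * k ^ 2 * log k + c * k ^ 2 + (n - k) * p k + k * (n - k))
      - (α * n ^ 2 * log n + c * n ^ 2)) =o[atTop] fun n : ℕ => (n : ℝ) ^ 2 := by
  have hlog : (fun n : ℕ => (n : ℝ) * log n) =o[atTop] fun n : ℕ => (n : ℝ) ^ 2 := by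
    simpa [sq] using (isBigO_refl (fun n : ℕ => (n : ℝ)) atTop).mul_isLittleO
      (isLittleO_log_id_atTop.comp_tendsto tendsto_natCast_atTop_atTop)
  have hprofile' : (fun n : ℕ => (n : ℝ) ^ 2 * (∑ k ∈ Finset.range (n - s₀ + 1),
      a n k * wienerProfile α c cp (k / n) - c)) =o[atTop] fun n : ℕ => (n : ℝ) ^ 2 := by
    simpa using (isBigO_refl (fun n : ℕ => (n : ℝ) ^ 2) atTop).mul_isLittleO
      ((isLittleO_one_iff ℝ).mpr (tendsto_sub_nhds_zero_iff.mpr hprofile))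
  have hrem := isLittleO_sum_mul_sub_mul ha hmass
    (hmean.mono fun n h => h.trans_le (sub_le_self _ (Nat.cast_nonneg s₀))) hp
  refine (((hlog.const_mul_left (-(α * s₀))).add hprofile').add hrem).congr' ?_ .rfl
  filter_upwards [hmean, eventually_ne_atTop 0] with n hmean hn
  simp only [summand_eq_wienerProfile α c cp p hn, mul_add, Finset.sum_add_distrib,
    mul_left_comm (a n _), ← Finset.mul_sum, hmean]
  ring

end Defect

lemma mul_integral_wienerProfile {Ω : Type*} [MeasurableSpace Ω] {ℙ : Measure Ω}
    [IsProbabilityMeasure ℙ] {V : Ω → ℝ} (hV : Measurable V)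
    (hV01 : ∀ ω, V ω ∈ Set.Icc (0 : ℝ) 1) {b μ : ℝ} (hb : b ≠ 0) (hEV : ∫ ω, V ω ∂ℙ = 1 / b)
    (hμ : μ = -b * ∫ ω, V ω * Real.log (V ω) ∂ℙ) (hμ0 : μ ≠ 0) (hq : b * ∫ ω, V ω ^ 2 ∂ℙ ≠ 1)
    (cp : ℝ) :
    b * ∫ ω, wienerProfile (1 / μ) (cp + 1 - 1 / (1 - b * ∫ ω, V ω ^ 2 ∂ℙ)) cp (V ω) ∂ℙ
      = cp + 1 - 1 / (1 - b * ∫ ω, V ω ^ 2 ∂ℙ) := by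
  have hi : ∀ {φ : ℝ → ℝ}, Continuous φ → Integrable (fun ω => φ (V ω)) ℙ :=
    integrable_comp_of_mem_Icc hV hV01
  have hV1 : Integrable V ℙ := hi continuous_id
  have hV2 : Integrable (fun ω => V ω ^ 2) ℙ := hi (continuous_pow 2)
  have hmix : ∫ ω, V ω * (1 - V ω) ∂ℙ = ∫ ω, V ω ∂ℙ - ∫ ω, V ω ^ 2 ∂ℙ := by
    rw [← integral_sub hV1 hV2]
    exact integral_congr_ae (ae_of_all _ fun ω => by ring)
  have hq' : 1 - b * ∫ ω, V ω ^ 2 ∂ℙ ≠ 0 := sub_ne_zero.mpr (Ne.symm hq)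
  have hL : ∫ ω, V ω * Real.log (V ω) ∂ℙ ≠ 0 := fun h => hμ0 (by rw [hμ, h, mul_zero])
  unfold wienerProfile
  rw [integral_add, integral_add, integral_const_mul, integral_const_mul, integral_const_mul, hmix,
    hEV, hμ]
  · field_simp
    ring
  · exact (hi Real.continuous_mul_log).const_mul _
  · exact hV2.const_mul _
  · exact ((hi Real.continuous_mul_log).const_mul _).add (hV2.const_mul _)
  · exact (hi (continuous_id.mul (continuous_const.sub continuous_id))).const_mul _

theorem stmt1_general
    (b s₀ s₁ : ℕ) (hb : 2 ≤ b) (hs₀ : 1 ≤ s₀)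
    {Ω : Type*} [MeasurableSpace Ω] (ℙ : Measure Ω) [IsProbabilityMeasure ℙ]
    (V : Ω → ℝ) (hVmeas : Measurable V)
    (hV01 : ∀ ω, V ω ∈ Set.Icc (0:ℝ) 1)
    (hVdens : ℙ.map V ≪ (volume : Measure ℝ))
    (hEV : (∫ ω, V ω ∂ℙ) = 1 / b)
    (I : ℕ → Ω → ℕ) (hImeas : ∀ n, Measurable (I n))
    (hIdist : ∀ n : ℕ, s₀ + b * s₁ ≤ n → ∀ k : ℕ, k ≤ n - s₀ - b * s₁ →
      (ℙ {ω | I n ω = k + s₁}).toReal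
        = ∫ ω, ((n - s₀ - b * s₁).choose k : ℝ) * V ω ^ k
            * (1 - V ω) ^ (n - s₀ - b * s₁ - k) ∂ℙ)
    (μ : ℝ) (hμ : μ = -(b : ℝ) * ∫ ω, V ω * Real.log (V ω) ∂ℙ) (hμpos : 0 < μ)
    (p : ℕ → ℝ) (cp : ℝ)
    (hp : (fun n : ℕ => p n - (1 / μ) * n * Real.log n - cp * n) =o[atTop] fun n : ℕ => (n : ℝ))
    (w : ℕ → ℝ)
    (nstar : ℕ)
    (hrec : ∀ n : ℕ, nstar ≤ n →
      w n = (b : ℝ) * ∑ k ∈ Finset.range (n - s₀ + 1),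
        (ℙ {ω | I n ω = k}).toReal * (w k + ((n : ℝ) - k) * p k + (k : ℝ) * ((n : ℝ) - k))) :
    ∃ cw : ℝ,
      (fun n : ℕ => w n - (1 / μ) * (n : ℝ) ^ 2 * Real.log n - cw * (n : ℝ) ^ 2)
        =o[atTop] fun n : ℕ => ((n : ℝ) ^ 2) := by
  have h : IsFirstSubtreeSize ℙ V I b s₀ s₁ := ⟨by omega, hVmeas, hV01, hImeas, hIdist⟩
  have hq : (b : ℝ) * ∫ ω, V ω ^ 2 ∂ℙ < 1 := by
    simpa [hEV, h.pos.ne'] using mul_lt_mul_of_pos_left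
      (integral_sq_lt_integral hVmeas hV01 hVdens) (by positivity : (0 : ℝ) < b)
  set c := cp + 1 - 1 / (1 - (b : ℝ) * ∫ ω, V ω ^ 2 ∂ℙ)
  have hprofile := h.tendsto_sum_subtreeWeight_mul (continuous_wienerProfile (1 / μ) c cp)
  rw [mul_integral_wienerProfile hVmeas hV01 (by positivity) hEV hμ hμpos.ne' hq.ne cp]
    at hprofile
  have hmass : ∀ᶠ n in atTop, ∑ k ∈ Finset.range (n - s₀ + 1), subtreeWeight ℙ I b n k ≤ b :=
    (eventually_ge_atTop _).mono fun n hn => (h.sum_subtreeWeight hn).le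
  have hmean := (eventually_ge_atTop _).mono fun n hn => h.sum_subtreeWeight_mul_self hEV hn
  refine ⟨c, isLittleO_sq_of_recursion hs₀ subtreeWeight_nonneg hq hmass
    (hmean.mono fun _ hk => hk.le)
    (by simpa using h.tendsto_sum_subtreeWeight_mul (continuous_pow 2))
    (isLittleO_recursion_defect subtreeWeight_nonneg hp hmass hmean hprofile) ?_⟩
  filter_upwards [eventually_ge_atTop nstar] with n hn
  rw [hrec n hn, ← sum_subtreeWeight_mul, add_sub_assoc', ← Finset.sum_add_distrib, sub_sub]
  exact congrArg (· - _) (Finset.sum_congr rfl fun k _ => by ring)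

/-- (Theorem 3, expected Wiener index of random split trees.)
Assume `s₀ ≥ 1`. Suppose `p_n = (1/μ)·n·log n + c_p·n + o(n)` and `(w_n)` satisfies
`w_n = O(n² log n)` together with, for all large `n`, the recursion
`w_n = b·Σ_{k=0}^{n-s₀} P(I_n = k)·(w_k + (n-k)·p_k + k·(n-k))`. Then there is a constant
`c_w` with `w_n = (1/μ)·n²·log n + c_w·n² + o(n²)`, where `μ = -b·E[V·log V]`. -/
theorem stmt1
    (b s₀ s₁ : ℕ) (hb : 2 ≤ b) (hs₀ : 1 ≤ s₀)
    {Ω : Type*} [MeasurableSpace Ω] (ℙ : Measure Ω) [IsProbabilityMeasure ℙ]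
    (V : Ω → ℝ) (hVmeas : Measurable V)
    (hV01 : ∀ ω, V ω ∈ Set.Icc (0:ℝ) 1)
    (hVdens : ℙ.map V ≪ (volume : Measure ℝ))
    (hVtail : ∀ x : ℝ, x < 1 → ℙ {ω | V ω ≤ x} < 1)
    (hEV : (∫ ω, V ω ∂ℙ) = 1 / b)
    (I : ℕ → Ω → ℕ) (hImeas : ∀ n, Measurable (I n))
    (hIdist : ∀ n : ℕ, s₀ + b * s₁ ≤ n → ∀ k : ℕ, k ≤ n - s₀ - b * s₁ →
      (ℙ {ω | I n ω = k + s₁}).toReal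
        = ∫ ω, ((n - s₀ - b * s₁).choose k : ℝ) * V ω ^ k
            * (1 - V ω) ^ (n - s₀ - b * s₁ - k) ∂ℙ)
    (μ : ℝ) (hμ : μ = -(b : ℝ) * ∫ ω, V ω * Real.log (V ω) ∂ℙ) (hμpos : 0 < μ)
    (p : ℕ → ℝ) (cp : ℝ)
    (hp : (fun n : ℕ => p n - (1 / μ) * n * Real.log n - cp * n) =o[atTop] fun n : ℕ => (n : ℝ))
    (w : ℕ → ℝ)
    (hwO : (fun n : ℕ => w n) =O[atTop] fun n : ℕ => (n : ℝ) ^ 2 * Real.log n)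
    (nstar : ℕ)
    (hrec : ∀ n : ℕ, nstar ≤ n →
      w n = (b : ℝ) * ∑ k ∈ Finset.range (n - s₀ + 1),
        (ℙ {ω | I n ω = k}).toReal * (w k + ((n : ℝ) - k) * p k + (k : ℝ) * ((n : ℝ) - k))) :
    ∃ cw : ℝ,
      (fun n : ℕ => w n - (1 / μ) * (n : ℝ) ^ 2 * Real.log n - cw * (n : ℝ) ^ 2)
        =o[atTop] fun n : ℕ => ((n : ℝ) ^ 2) :=
  stmt1_general b s₀ s₁ hb hs₀ ℙ V hVmeas hV01 hVdens hEV I hImeas hIdist μ hμ hμpos p cp hp w nstar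
    hrec
end

section
/- Let X, X^(1), …, X^(b) be i.i.d. real random variables with E[X] = 0 and E[X²] < ∞, independent of (V_1, …, V_b), such that X has the same distribution as Σ_{k=1}^b V_k·X^(k) + 1 + (1/μ)·Σ_{k=1}^b V_k·log V_k. Then E[X²] = ((1/μ²)·E[(Σ_{k=1}^b V_k·log V_k)²] − 1)·(1 − Σ_{k=1}^b E[V_k²])^{−1}. -/
open MeasureTheory

/-! Pushed through the joint law, the fixed-point equation says that `E[X²]` is the second moment
of `S(x, v) = Σₖ vₖ xₖ + C(v)`, `C(v) = 1 + μ⁻¹ Σₖ vₖ log vₖ`, under `law(X)^⊗b ⊗ law(V)`; in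
particular `S²` is integrable. Integrating out `x` first, centredness and independence of the
coordinates kill the cross terms and leave `E[X²] Σₖ vₖ² + C(v)²`. Identical marginals give
`E[Σₖ Vₖ log Vₖ] = -μ`, whence `E[C(V)²] = μ⁻² E[(Σₖ Vₖ log Vₖ)²] - 1`. The resulting linear
equation for `E[X²]` can be solved because `Σₖ E[Vₖ²] < 1`: a coordinate with a density lies in
`(0, 1)` almost surely, and then `Σₖ Vₖ² < Σₖ Vₖ = 1`. -/

section

open ProbabilityTheory

lemma integral_sum_mul_add_sq_pi {ι : Type*} [Fintype ι] {ν : Measure ℝ} [IsProbabilityMeasure ν]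
    (hν : MemLp id 2 ν) (hmean : ∫ t, t ∂ν = 0) (a : ι → ℝ) (c : ℝ) :
    ∫ x, (∑ i, a i * x i + c) ^ 2 ∂(Measure.pi fun _ ↦ ν)
      = (∫ t, t ^ 2 ∂ν) * ∑ i, a i ^ 2 + c ^ 2 := by
  set π := Measure.pi fun _ : ι ↦ ν
  have hcoord : ∀ i, MemLp (fun x : ι → ℝ ↦ a i * x i) 2 π := fun i ↦
    (hν.const_mul (a i)).comp_measurePreserving (measurePreserving_eval _ i)
  have hsum : MemLp (fun x : ι → ℝ ↦ ∑ i, a i * x i) 2 π :=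
    memLp_finsetSum _ fun i _ ↦ hcoord i
  have hvar : Var[fun x : ι → ℝ ↦ ∑ i, a i * x i + c; π] = (∫ t, t ^ 2 ∂ν) * ∑ i, a i ^ 2 := by
    rw [variance_add_const hsum.aestronglyMeasurable]
    have := variance_sum_pi (μ := fun _ : ι ↦ ν) (X := fun i t ↦ a i * t)
      fun i ↦ hν.const_mul (a i)
    simp only [Finset.sum_fn] at this
    rw [this, Finset.mul_sum]
    refine Finset.sum_congr rfl fun i _ ↦ ?_
    change Var[fun t ↦ a i * id t; ν] = _
    rw [variance_const_mul, variance_eq_sub hν]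
    simp [hmean, mul_comm]
  have hmeanY : ∫ x, ∑ i, a i * x i + c ∂π = c := by
    rw [integral_add (hsum.integrable one_le_two) (integrable_const c),
      integral_finsetSum _ fun i _ ↦ (hcoord i).integrable one_le_two]
    simp [integral_const_mul, integral_eval, hmean, π]
  have hY : MemLp (fun x : ι → ℝ ↦ ∑ i, a i * x i + c) 2 π := hsum.add (memLp_const c)
  have hvarY := variance_eq_sub hY
  simp only [Pi.pow_apply] at hvarY
  rw [hmeanY, hvar] at hvarY
  linarith

lemma integral_sq_eq_of_map_affine_eq {ι : Type*} [Fintype ι] {ν : Measure ℝ}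
    [IsProbabilityMeasure ν] (hν : MemLp id 2 ν) (hmean : ∫ t, t ∂ν = 0)
    {ρ : Measure (ι → ℝ)} [IsProbabilityMeasure ρ] {C : (ι → ℝ) → ℝ} (hC : Measurable C)
    (hfix : ((Measure.pi fun _ ↦ ν).prod ρ).map (fun z ↦ ∑ i, z.2 i * z.1 i + C z.2) = ν) :
    ∫ t, t ^ 2 ∂ν = ∫ v, ((∫ t, t ^ 2 ∂ν) * ∑ i, v i ^ 2 + C v ^ 2) ∂ρ := by
  set S := fun z : (ι → ℝ) × (ι → ℝ) ↦ ∑ i, z.2 i * z.1 i + C z.2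
  have hS : Measurable S := by fun_prop
  have hS2 : Integrable (fun z ↦ S z ^ 2) ((Measure.pi fun _ ↦ ν).prod ρ) := by
    refine (integrable_map_measure (g := fun t ↦ t ^ 2) (by fun_prop) hS.aemeasurable).mp ?_
    rw [hfix]
    exact hν.integrable_sq
  calc ∫ t, t ^ 2 ∂ν = ∫ t, t ^ 2 ∂(((Measure.pi fun _ ↦ ν).prod ρ).map S) := by rw [hfix]
    _ = ∫ z, S z ^ 2 ∂((Measure.pi fun _ ↦ ν).prod ρ) := integral_map hS.aemeasurable (by fun_prop)
    _ = ∫ v, ∫ x, S (x, v) ^ 2 ∂(Measure.pi fun _ ↦ ν) ∂ρ := integral_prod_symm _ hS2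
    _ = _ := integral_congr_ae (ae_of_all _ fun v ↦ integral_sum_mul_add_sq_pi hν hmean v (C v))

lemma abs_mul_log_le_one {t : ℝ} (h0 : 0 ≤ t) (h1 : t ≤ 1) : |t * Real.log t| ≤ 1 := by
  rcases h0.eq_or_lt with rfl | h0
  · simp
  · rw [mul_comm]
    exact (Real.abs_log_mul_self_lt t h0 h1).le

lemma abs_sum_mul_log_le_card {ι : Type*} [Fintype ι] {v : ι → ℝ} (hv : ∀ i, v i ∈ Set.Icc 0 1) :
    |∑ i, v i * Real.log (v i)| ≤ Fintype.card ι := by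
  calc |∑ i, v i * Real.log (v i)| ≤ ∑ i, |v i * Real.log (v i)| := Finset.abs_sum_le_sum_abs _ _
    _ ≤ ∑ _i : ι, (1 : ℝ) := Finset.sum_le_sum fun i _ ↦ abs_mul_log_le_one (hv i).1 (hv i).2
    _ = Fintype.card ι := by simp

lemma sum_sq_lt_one_of_mem_stdSimplex {ι : Type*} [Fintype ι] {v : ι → ℝ}
    (hv : v ∈ stdSimplex ℝ ι) {j : ι} (hj0 : 0 < v j) (hj1 : v j < 1) : ∑ i, v i ^ 2 < 1 := by
  rw [← hv.2]
  refine Finset.sum_lt_sum (fun i _ ↦ ?_) ⟨j, Finset.mem_univ j, by nlinarith⟩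
  have := mem_Icc_of_mem_stdSimplex hv i
  nlinarith [this.1, this.2]

variable {Ω : Type*} [MeasurableSpace Ω] {P : Measure Ω}

lemma integral_sum_comp_eq_card_mul {ι : Type*} [Fintype ι] {V : Ω → ι → ℝ} (hV : Measurable V)
    {f : ℝ → ℝ} (hf : Measurable f) {j : ι} (hfj : Integrable (fun ω ↦ f (V ω j)) P)
    (hVid : ∀ i, P.map (fun ω ↦ V ω i) = P.map (fun ω ↦ V ω j)) :
    ∫ ω, ∑ i, f (V ω i) ∂P = Fintype.card ι * ∫ ω, f (V ω j) ∂P := by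
  have hid : ∀ i, IdentDistrib (fun ω ↦ f (V ω i)) (fun ω ↦ f (V ω j)) P P := fun i ↦
    (IdentDistrib.mk (by fun_prop) (by fun_prop) (hVid i)).comp hf
  rw [integral_finsetSum _ fun i _ ↦ (hid i).integrable_iff.mpr hfj,
    Finset.sum_congr rfl fun i _ ↦ (hid i).integral_eq]
  simp

variable [IsProbabilityMeasure P]

lemma integrable_sq_of_mem_Icc {ι : Type*} {V : Ω → ι → ℝ} (hV : Measurable V) {i : ι}
    (hVi : ∀ ω, V ω i ∈ Set.Icc 0 1) : Integrable (fun ω ↦ V ω i ^ 2) P :=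
  Integrable.of_bound (by fun_prop) 1 (ae_of_all _ fun ω ↦ by
    rw [Real.norm_eq_abs, abs_of_nonneg (sq_nonneg _)]
    nlinarith [(hVi ω).1, (hVi ω).2])

lemma integral_sum_sq_lt_one {ι : Type*} [Fintype ι] {V : Ω → ι → ℝ} (hV : Measurable V)
    (hVs : ∀ ω, V ω ∈ stdSimplex ℝ ι) {j : ι} (hj : P.map (fun ω ↦ V ω j) ≪ volume) :
    ∑ i, ∫ ω, V ω i ^ 2 ∂P < 1 := by
  have hVj : Measurable fun ω ↦ V ω j := by fun_prop
  have hatoms : ∀ᵐ ω ∂P, V ω j ≠ 0 ∧ V ω j ≠ 1 := by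
    refine ae_of_ae_map (p := fun t ↦ t ≠ 0 ∧ t ≠ 1) hVj.aemeasurable (hj.ae_le ?_)
    have : volume ({0, 1} : Set ℝ) = 0 := (Set.toFinite _).measure_zero _
    filter_upwards [measure_eq_zero_iff_ae_notMem.mp this] with t ht
    simpa [not_or] using ht
  have hgap : ∀ᵐ ω ∂P, 0 < 1 - ∑ i, V ω i ^ 2 := by
    filter_upwards [hatoms] with ω ⟨h0, h1⟩
    have := mem_Icc_of_mem_stdSimplex (hVs ω) j
    exact sub_pos.2 (sum_sq_lt_one_of_mem_stdSimplex (hVs ω) (this.1.lt_of_ne' h0)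
      (this.2.lt_of_ne h1))
  have hVsq : ∀ i, Integrable (fun ω ↦ V ω i ^ 2) P := fun i ↦
    integrable_sq_of_mem_Icc hV fun ω ↦ mem_Icc_of_mem_stdSimplex (hVs ω) i
  have hint : Integrable (fun ω ↦ ∑ i, V ω i ^ 2) P := integrable_finsetSum _ fun i _ ↦ hVsq i
  have hpos : 0 < ∫ ω, 1 - ∑ i, V ω i ^ 2 ∂P := by
    rw [integral_pos_iff_support_of_nonneg_ae (hgap.mono fun _ h ↦ h.le)
      ((integrable_const 1).sub hint)]
    rw [measure_congr (ae_eq_univ.mpr _), measure_univ]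
    · exact one_pos
    · simpa [ae_iff, Function.compl_support] using hgap.mono fun _ h ↦ h.ne'
  rw [integral_sub (integrable_const 1) hint, integral_finsetSum _ fun i _ ↦ hVsq i] at hpos
  simpa using hpos

lemma integral_one_add_mul_sq {L : Ω → ℝ} (hL : MemLp L 2 P) {μ : ℝ} (hμ : μ ≠ 0)
    (hmean : ∫ ω, L ω ∂P = -μ) :
    ∫ ω, (1 + (1 / μ) * L ω) ^ 2 ∂P = (1 / μ ^ 2) * ∫ ω, L ω ^ 2 ∂P - 1 := by
  have hL1 : Integrable L P := hL.integrable one_le_two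
  have hL2 : Integrable (fun ω ↦ L ω ^ 2) P := hL.integrable_sq
  have hexp : ∀ ω, (1 + (1 / μ) * L ω) ^ 2 = 1 + (2 / μ * L ω + 1 / μ ^ 2 * L ω ^ 2) :=
    fun ω ↦ by ring
  have hlin : Integrable (fun ω ↦ 2 / μ * L ω + 1 / μ ^ 2 * L ω ^ 2) P :=
    (hL1.const_mul _).add (hL2.const_mul _)
  simp_rw [hexp]
  rw [integral_add (integrable_const 1) hlin, integral_add (hL1.const_mul _) (hL2.const_mul _),
    integral_const_mul, integral_const_mul, hmean, integral_const, probReal_univ, one_smul]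
  field_simp
  ring

lemma integral_mul_sum_sq_add_sq_one_add_mul_log {ι : Type*} [Fintype ι] {V : Ω → ι → ℝ}
    (hV : Measurable V) (hV01 : ∀ ω i, V ω i ∈ Set.Icc 0 1) {j : ι}
    (hVid : ∀ i, P.map (fun ω ↦ V ω i) = P.map (fun ω ↦ V ω j)) {μ : ℝ} (hμ0 : μ ≠ 0)
    (hμ : μ = -(Fintype.card ι : ℝ) * ∫ ω, V ω j * Real.log (V ω j) ∂P) (σ2 : ℝ) :
    ∫ ω, (σ2 * ∑ i, V ω i ^ 2 + (1 + (1 / μ) * ∑ i, V ω i * Real.log (V ω i)) ^ 2) ∂P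
      = σ2 * ∑ i, ∫ ω, V ω i ^ 2 ∂P
        + ((1 / μ ^ 2) * ∫ ω, (∑ i, V ω i * Real.log (V ω i)) ^ 2 ∂P - 1) := by
  set L := fun ω ↦ ∑ i, V ω i * Real.log (V ω i)
  have hL : MemLp L 2 P := MemLp.of_bound (by fun_prop) (Fintype.card ι)
    (ae_of_all _ fun ω ↦ abs_sum_mul_log_le_card (hV01 ω))
  have hLmean : ∫ ω, L ω ∂P = -μ := by
    rw [integral_sum_comp_eq_card_mul hV (f := fun t ↦ t * Real.log t) (by fun_prop) _ hVid, hμ]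
    · simp
    · exact Integrable.of_bound (by fun_prop) 1 (ae_of_all _ fun ω ↦
        abs_mul_log_le_one (hV01 ω j).1 (hV01 ω j).2)
  have hVsq : ∀ i, Integrable (fun ω ↦ V ω i ^ 2) P := fun i ↦
    integrable_sq_of_mem_Icc hV fun ω ↦ hV01 ω i
  have hC : MemLp (fun ω ↦ 1 + 1 / μ * L ω) 2 P := (memLp_const (1 : ℝ)).add (hL.const_mul _)
  rw [integral_add ((integrable_finsetSum _ fun i _ ↦ hVsq i).const_mul _) hC.integrable_sq,
    integral_const_mul, integral_finsetSum _ fun i _ ↦ hVsq i,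
    integral_one_add_mul_sq hL hμ0 hLmean]

end

/-- If `X, X⁽¹⁾, …, X⁽ᵇ⁾` are i.i.d. centered square-integrable random
variables, independent of `(V_1, …, V_b)` (expressed by the joint law of
`((X⁽¹⁾, …, X⁽ᵇ⁾), V)` being the product `law(X)^⊗b ⊗ law(V)`), such that `X` has the same
distribution as `Σ_k V_k·X⁽ᵏ⁾ + 1 + (1/μ)·Σ_k V_k·log V_k`, then
`E[X²] = ((1/μ²)·E[(Σ_k V_k·log V_k)²] − 1)·(1 − Σ_k E[V_k²])⁻¹`. -/
theorem stmt3
    (b : ℕ) (hb : 2 ≤ b)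
    {Ω : Type*} [MeasurableSpace Ω] (ℙ : Measure Ω) [IsProbabilityMeasure ℙ]
    (V : Ω → Fin b → ℝ) (hVmeas : Measurable V)
    (hV01 : ∀ ω i, V ω i ∈ Set.Icc (0:ℝ) 1)
    (hVsum : ∀ ω, ∑ i, V ω i = 1)
    (hVid : ∀ i : Fin b, ℙ.map (fun ω => V ω i) = ℙ.map (fun ω => V ω ⟨0, by omega⟩))
    (hVdens : ℙ.map (fun ω => V ω ⟨0, by omega⟩) ≪ (volume : Measure ℝ))
    (μ : ℝ) (hμ : μ = -(b : ℝ) * ∫ ω, V ω ⟨0, by omega⟩ * Real.log (V ω ⟨0, by omega⟩) ∂ℙ)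
    (hμpos : 0 < μ)
    (X : Ω → ℝ) (hXmeas : Measurable X)
    (Xs : Fin b → Ω → ℝ) (hXsmeas : ∀ i, Measurable (Xs i))
    (hXmean : (∫ ω, X ω ∂ℙ) = 0)
    (hXsq : Integrable (fun ω => X ω ^ 2) ℙ)
    (hjoint : ℙ.map (fun ω => ((fun i => Xs i ω), V ω))
        = (Measure.pi fun _ : Fin b => ℙ.map X).prod (ℙ.map V))
    (hfix : ℙ.map (fun ω =>
        (∑ k, V ω k * Xs k ω) + 1 + (1 / μ) * ∑ k, V ω k * Real.log (V ω k))
      = ℙ.map X) :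
    (∫ ω, X ω ^ 2 ∂ℙ)
      = ((1 / μ ^ 2) * (∫ ω, (∑ k, V ω k * Real.log (V ω k)) ^ 2 ∂ℙ) - 1)
          * (1 - ∑ k, ∫ ω, V ω k ^ 2 ∂ℙ)⁻¹ := by
  set L : (Fin b → ℝ) → ℝ := fun v ↦ ∑ k, v k * Real.log (v k)
  have := Measure.isProbabilityMeasure_map (μ := ℙ) hXmeas.aemeasurable
  have := Measure.isProbabilityMeasure_map (μ := ℙ) hVmeas.aemeasurable
  have hν : MemLp id 2 (ℙ.map X) := (memLp_map_measure_iff (by fun_prop) (by fun_prop)).2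
    ((memLp_two_iff_integrable_sq hXmeas.aestronglyMeasurable).2 hXsq)
  have hνmean : ∫ t, t ∂(ℙ.map X) = 0 := by rwa [integral_map (by fun_prop) (by fun_prop)]
  have hfixν : ((Measure.pi fun _ ↦ ℙ.map X).prod (ℙ.map V)).map
      (fun z ↦ ∑ k, z.2 k * z.1 k + (1 + (1 / μ) * L z.2)) = ℙ.map X := by
    rw [← hjoint, Measure.map_map (by fun_prop) (by fun_prop), ← hfix]
    congr 1
    ext ω
    simp only [Function.comp_apply, L]
    ring
  have hmoment := integral_sq_eq_of_map_affine_eq hν hνmean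
    (C := fun v ↦ 1 + (1 / μ) * L v) (by fun_prop) hfixν
  rw [integral_map (by fun_prop) (by fun_prop), integral_map (by fun_prop) (by fun_prop),
    integral_mul_sum_sq_add_sq_one_add_mul_log hVmeas hV01 hVid hμpos.ne'
      (by simpa using hμ)] at hmoment
  have hQ := integral_sum_sq_lt_one hVmeas (fun ω ↦ ⟨fun i ↦ (hV01 ω i).1, hVsum ω⟩) hVdens
  rw [eq_mul_inv_iff_mul_eq₀ (sub_ne_zero.2 hQ.ne')]
  linear_combination hmoment
end

section
/- Let (H_n)_{n≥0} be a sequence of real numbers and r : ℕ → ℝ a function such that H_n = Σ_{k=0}^{n−1} ν_n({k})·H_k + r(n) for all n ≥ 1. Then for every n₁ ∈ ℕ and every n ∈ ℕ, H_n = E_{−log n}[h(S_{σ(n₁)})] + E_{−log n}[Σ_{t=0}^{σ(n₁)−1} r(exp(−S_t))], where h : E → ℝ is given by h(−log m) = H_m for m ≥ 1 and h(1) = H_0, and r(exp(−S_t)) is interpreted via exp(−S_t) ∈ ℕ for states S_t = −log m. -/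
/-!
Write `F(L) = H(S_σ) + ∑_{t<σ} r(S_t)` for the exit payoff of a path `L`. Peeling off the
first state gives `F(m :: L) = H m` if `m < n₁` and `F(m :: L) = F(L) + r m` otherwise, so
conditioning on the first step shows that `n ↦ E_n[F]` satisfies the same recursion
`x_n = ∑_k ν_n(k) x_k + r(n)` as `H` above level `n₁`, and the same boundary values below it.
Since the chain strictly decreases above `n₁`, induction on the horizon `T ≥ n` closes the
argument; all expectations are finite sums because every `ν_n` has finite support.
-/

open MeasureTheory Filter Topology

/-- The law of the trajectory `(S_0, …, S_T)` (as a list of length `T+1`) of the Markov chain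
on `ℕ` with one-step transition kernel `K`, started at `n`.  Under the reindexing
`n ↔ -log n` (for `n ≥ 1`) and `0 ↔ 1` (the absorbing state), this is exactly the Markov
chain of Bruhn with transition probabilities `P(S_1 = -log k | S_0 = -log n) = ν_n({k})`. -/
noncomputable def traj (K : ℕ → PMF ℕ) : ℕ → ℕ → PMF (List ℕ)
  | 0, n => PMF.pure [n]
  | T + 1, n => (K n).bind fun m => (traj K T m).map fun L => n :: L

namespace PMF

variable {α β : Type*}

lemma tsum_toReal (p : PMF α) : ∑' a, (p a).toReal = 1 := by
  rw [← ENNReal.tsum_toReal_eq p.apply_ne_top, p.tsum_coe, ENNReal.toReal_one]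

lemma tsum_toReal_mul_const (p : PMF α) (c : ℝ) : ∑' a, (p a).toReal * c = c := by
  rw [tsum_mul_right, p.tsum_toReal, one_mul]

lemma toReal_mul_eq_zero_of_notMem_support (p : PMF α) {a : α} (ha : a ∉ p.support)
    (x : ℝ) : (p a).toReal * x = 0 := by
  rw [(p.apply_eq_zero_iff a).2 ha, ENNReal.toReal_zero, zero_mul]

lemma summable_toReal_mul (p : PMF α) (hp : p.support.Finite) (f : α → ℝ) :
    Summable fun a => (p a).toReal * f a :=
  summable_of_hasFiniteSupport <| hp.subset fun a ha => by
    by_contra h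
    exact ha (p.toReal_mul_eq_zero_of_notMem_support h _)

lemma tsum_toReal_mul_congr (p : PMF α) {f g : α → ℝ} (h : ∀ a ∈ p.support, f a = g a) :
    ∑' a, (p a).toReal * f a = ∑' a, (p a).toReal * g a := by
  refine tsum_congr fun a => ?_
  by_cases ha : a ∈ p.support
  · rw [h a ha]
  · rw [p.toReal_mul_eq_zero_of_notMem_support ha, p.toReal_mul_eq_zero_of_notMem_support ha]

lemma tsum_toReal_mul_add_const (p : PMF α) (hp : p.support.Finite) (f : α → ℝ) (c : ℝ) :
    ∑' a, (p a).toReal * (f a + c) = ∑' a, (p a).toReal * f a + c := by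
  simp_rw [mul_add]
  rw [(p.summable_toReal_mul hp f).tsum_add (p.summable_toReal_mul hp fun _ => c),
    p.tsum_toReal_mul_const]

lemma tsum_toReal_mul_map_of_injective (p : PMF α) {g : α → β} (hg : g.Injective)
    (f : β → ℝ) : ∑' b, ((p.map g) b).toReal * f b = ∑' a, (p a).toReal * f (g a) := by
  have map_apply_image (a : α) : (p.map g) (g a) = p a := by
    rw [map_apply, tsum_eq_single a fun a' ha' => if_neg (hg.ne ha').symm, if_pos rfl]
  have support_subset : (fun b => ((p.map g) b).toReal * f b).support ⊆ Set.range g := by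
    intro b hb
    by_contra hgb
    refine hb ((p.map g).toReal_mul_eq_zero_of_notMem_support ?_ _)
    rw [support_map]
    exact fun ⟨a, _, hab⟩ => hgb ⟨a, hab⟩
  rw [← hg.tsum_eq support_subset]
  simp only [map_apply_image]

lemma tsum_toReal_mul_bind (p : PMF α) (q : α → PMF β) (hp : p.support.Finite)
    (hq : ∀ a ∈ p.support, (q a).support.Finite) (f : β → ℝ) :
    ∑' b, ((p.bind q) b).toReal * f b = ∑' a, (p a).toReal * ∑' b, ((q a) b).toReal * f b := by
  have bind_toReal (b : β) : ((p.bind q) b).toReal = ∑' a, (p a).toReal * ((q a) b).toReal := by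
    rw [bind_apply, ENNReal.tsum_toReal_eq fun a => ENNReal.mul_ne_top (p.apply_ne_top a)
      ((q a).apply_ne_top b)]
    simp only [ENNReal.toReal_mul]
  have summable : Summable (Function.uncurry fun b a => (p a).toReal * ((q a) b).toReal * f b) := by
    refine summable_of_hasFiniteSupport <|
      ((hp.biUnion hq).prod hp).subset fun ⟨b, a⟩ hba => ?_
    simp only [Function.mem_support, Function.uncurry_apply_pair, mul_ne_zero_iff,
      ENNReal.toReal_ne_zero, ne_eq, ← mem_support_iff] at hba
    exact ⟨Set.mem_biUnion hba.1.1.1 hba.1.2.1, hba.1.1.1⟩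
  simp_rw [bind_toReal, ← tsum_mul_right]
  rw [← summable.tsum_comm]
  simp_rw [← tsum_mul_left, mul_assoc]

end PMF

section Trajectory

variable (K : ℕ → PMF ℕ)

lemma traj_succ (T n : ℕ) :
    traj K (T + 1) n = (K n).bind fun m => (traj K T m).map (n :: ·) := rfl

lemma exists_eq_cons_of_mem_support_traj {T n : ℕ} {L : List ℕ}
    (hL : L ∈ (traj K T n).support) : ∃ L', L = n :: L' := by
  cases T with
  | zero =>
    rw [traj, PMF.support_pure] at hL
    exact ⟨[], hL⟩
  | succ T =>
    obtain ⟨m, -, hm⟩ := (PMF.mem_support_bind_iff _ _ _).1 hL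
    obtain ⟨L', -, rfl⟩ := (PMF.support_map _ _ ▸ hm : L ∈ (n :: ·) '' _)
    exact ⟨L', rfl⟩

variable {K}

lemma finite_support_traj (hK : ∀ n, (K n).support.Finite) (T n : ℕ) :
    (traj K T n).support.Finite := by
  induction T generalizing n with
  | zero => simp [traj]
  | succ T ih =>
    rw [traj_succ, PMF.support_bind]
    exact (hK n).biUnion fun m _ => PMF.support_map _ _ ▸ (ih m).image _

lemma tsum_toReal_traj_succ_mul (hK : ∀ n, (K n).support.Finite) (T n : ℕ) (f : List ℕ → ℝ) :
    ∑' L, ((traj K (T + 1) n) L).toReal * f L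
      = ∑' m, ((K n) m).toReal * ∑' L, ((traj K T m) L).toReal * f (n :: L) := by
  rw [traj_succ, PMF.tsum_toReal_mul_bind _ _ (hK n) fun m _ => by
    simpa only [PMF.support_map] using (finite_support_traj hK T m).image _]
  simp only [PMF.tsum_toReal_mul_map_of_injective _ (List.cons_injective (a := n))]

lemma tsum_toReal_traj_mul_of_forall_cons {T n : ℕ} {f : List ℕ → ℝ} {c : ℝ}
    (hf : ∀ L, f (n :: L) = c) : ∑' L, ((traj K T n) L).toReal * f L = c := by
  rw [(traj K T n).tsum_toReal_mul_congr fun L hL => ?_, PMF.tsum_toReal_mul_const]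
  obtain ⟨L', rfl⟩ := exists_eq_cons_of_mem_support_traj K hL
  exact hf L'

end Trajectory

section ExitPayoff

variable (H r : ℕ → ℝ) (n₁ : ℕ)

/-- `L.findIdx (· < n₁)` is the exit time `σ(n₁)` of the path `L`. -/
noncomputable def exitPayoff (L : List ℕ) : ℝ :=
  H (L.getD (L.findIdx fun m => decide (m < n₁)) 0)
    + ((L.take (L.findIdx fun m => decide (m < n₁))).map r).sum

variable {n₁}

lemma exitPayoff_cons_of_lt {m : ℕ} (hm : m < n₁) (L : List ℕ) :
    exitPayoff H r n₁ (m :: L) = H m := by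
  simp [exitPayoff, List.findIdx_cons, hm]

lemma exitPayoff_cons_of_le {m : ℕ} (hm : n₁ ≤ m) (L : List ℕ) :
    exitPayoff H r n₁ (m :: L) = exitPayoff H r n₁ L + r m := by
  simp only [exitPayoff, List.findIdx_cons, decide_eq_false (Nat.not_lt.2 hm), cond_false,
    List.getD_cons_succ, List.take_succ_cons, List.map_cons, List.sum_cons]
  ring

end ExitPayoff

theorem eq_tsum_toReal_traj_mul_exitPayoff {K : ℕ → PMF ℕ} {H r : ℕ → ℝ} {n₁ : ℕ}
    (hK : ∀ n, (K n).support.Finite) (hdec : ∀ n, n₁ ≤ n → ∀ k ∈ (K n).support, k < n)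
    (hrec : ∀ n, n₁ ≤ n → H n = ∑' k, ((K n) k).toReal * H k + r n) {T n : ℕ} (hnT : n ≤ T) :
    H n = ∑' L, ((traj K T n) L).toReal * exitPayoff H r n₁ L := by
  induction T generalizing n with
  | zero =>
    rcases lt_or_ge n n₁ with hn | hn
    · exact (tsum_toReal_traj_mul_of_forall_cons (exitPayoff_cons_of_lt H r hn)).symm
    · obtain ⟨k, hk⟩ := (K n).support_nonempty
      exact absurd (hdec n hn k hk) (by omega)
  | succ T ih =>
    rcases lt_or_ge n n₁ with hn | hn
    · exact (tsum_toReal_traj_mul_of_forall_cons (exitPayoff_cons_of_lt H r hn)).symm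
    calc H n = ∑' k, ((K n) k).toReal * (H k + r n) := by
          rw [PMF.tsum_toReal_mul_add_const _ (hK n), ← hrec n hn]
      _ = ∑' k, ((K n) k).toReal *
            ∑' L, ((traj K T k) L).toReal * (exitPayoff H r n₁ L + r n) :=
          (K n).tsum_toReal_mul_congr fun k hk => by
            rw [PMF.tsum_toReal_mul_add_const _ (finite_support_traj hK T k),
              ← ih (by have := hdec n hn k hk; omega)]
      _ = ∑' L, ((traj K (T + 1) n) L).toReal * exitPayoff H r n₁ L := by
          simp only [tsum_toReal_traj_succ_mul hK, exitPayoff_cons_of_le H r hn]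

/-- (Representation lemma of Bruhn.)  Let `ν_n` (`n ≥ 1`) be probability
measures on `{0, …, n-1}`, realized as the transition kernel `K` of a Markov chain on `ℕ`
(state `n ≥ 1` corresponds to the state `-log n` of Bruhn's chain and state `0` to the
absorbing state `1`, so that `h(S_t) = H_{exp(-S_t)}` corresponds to `H` at the current
state, and `σ(n₁) = inf{t : S_t > -log n₁}` corresponds to the first `t` with state `< n₁`).
If `H_n = Σ_{k=0}^{n-1} ν_n({k})·H_k + r(n)` for all `n ≥ 1`, then for every `n₁ ≥ 1` and
every `n`,
`H_n = E_{-log n}[H_{exp(-S_{σ(n₁)})}] + E_{-log n}[Σ_{t=0}^{σ(n₁)-1} r(exp(-S_t))]`;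
here the trajectory up to time `n` suffices since the chain strictly decreases until
absorption, so `σ(n₁) ≤ n` almost surely. -/
theorem stmt5
    (K : ℕ → PMF ℕ)
    (hK0 : K 0 = PMF.pure 0)
    (hKsupp : ∀ n : ℕ, 1 ≤ n → ∀ k ∈ (K n).support, k < n)
    (H : ℕ → ℝ) (r : ℕ → ℝ)
    (hrec : ∀ n : ℕ, 1 ≤ n →
      H n = (∑ k ∈ Finset.range n, ((K n) k).toReal * H k) + r n) :
    ∀ n₁ : ℕ, 1 ≤ n₁ → ∀ n : ℕ,
      H n = ∑' L : List ℕ, ((traj K n n) L).toReal *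
        (H (L.getD (L.findIdx fun m => decide (m < n₁)) 0)
          + ((L.take (L.findIdx fun m => decide (m < n₁))).map r).sum) := by
  intro n₁ hn₁ n
  have hK (n : ℕ) : (K n).support.Finite := by
    rcases n.eq_zero_or_pos with rfl | hn
    · simp [hK0]
    · exact (Set.finite_Iio n).subset (hKsupp n hn)
  refine eq_tsum_toReal_traj_mul_exitPayoff hK (fun n hn => hKsupp n (hn₁.trans hn))
    (fun n hn => ?_) le_rfl
  have hKn := hKsupp n (hn₁.trans hn)
  rw [hrec n (hn₁.trans hn), tsum_eq_sum fun k hk => (K n).toReal_mul_eq_zero_of_notMem_support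
    (fun hk' => hk (Finset.mem_range.2 (hKn k hk'))) _]
end

section
/- Let (S_t) be an AR-process. Then there exist a real number a* and a positive real number û such that for every measurable function l : ℝ → [0,∞), all real numbers y, z and every x ∈ E with x < y < z < a*, one has E_x[Σ_{t=τ(y)}^{τ(z)−1} l(S_t)] ≤ û · Σ_{n=⌊y⌋}^{⌈z⌉} sup_{t ∈ (n−1, n]} l(t). -/
open MeasureTheory Filter Topology

attribute [local instance] Classical.propDecidable

/-- An AR-process (approximate renewal process) in the sense of Bruhn: a time-homogeneous
Markov chain `(S_t)` on a countable state space `E ⊆ ℝ` without lower bound, given by a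
family of path measures `P x` (the chain started at `x`, realized as coordinate process on
`ℕ → E`) with transition probabilities `κ`, whose increments are strictly positive a.s., and
whose one-step distribution functions `F_x(y) = P_x(S_1 - x ≤ y)` converge weakly, as
`x → -∞`, to a distribution function `F` with `0 < ∫ t dF(t) < ∞` (the mean is expressed as
`∫_0^∞ (1 - F(t)) dt`, `F` being supported on `[0,∞)` since the increments are positive). -/
structure ARProcess where
  E : Set ℝ
  countable : E.Countable
  nobound : ¬ BddBelow E
  P : ↥E → Measure (ℕ → ↥E)
  prob : ∀ x, IsProbabilityMeasure (P x)
  κ : ↥E → ↥E → ENNReal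
  κprob : ∀ x, ∑' y, κ x y = 1
  init : ∀ x : ↥E, P x {ω | ω 0 = x} = 1
  markov : ∀ (x : ↥E) (t : ℕ) (path : ℕ → ↥E),
    P x {ω | ∀ i ≤ t + 1, ω i = path i}
      = P x {ω | ∀ i ≤ t, ω i = path i} * κ (path t) (path (t + 1))
  inc_pos : ∀ (x : ↥E) (t : ℕ), P x {ω | ((ω (t + 1) : ℝ)) ≤ ((ω t : ℝ))} = 0
  F : ℝ → ℝ
  F_mono : Monotone F
  F_bot : Tendsto F atBot (nhds 0)
  F_top : Tendsto F atTop (nhds 1)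
  F_conv : ∀ y : ℝ, ContinuousAt F y →
    Tendsto (fun x : ↥E => ((P x) {ω | ((ω 1 : ℝ)) - ((x : ℝ)) ≤ y}).toReal)
      (comap (fun x : ↥E => (x : ℝ)) atBot) (nhds (F y))
  mean_int : IntegrableOn (fun t => 1 - F t) (Set.Ioi (0 : ℝ))
  mean_pos : 0 < ∫ t in Set.Ioi (0 : ℝ), (1 - F t)

/-- `F̄_a(t) = inf_{x ≤ a} F_x(t)`, where `F_x(y) = P_x(S_1 - x ≤ y)`. -/
noncomputable def Fbar (C : ARProcess) (a t : ℝ) : ℝ :=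
  ⨅ x : {x : ↥C.E // (x : ℝ) ≤ a},
    ((C.P x.1) {ω | ((ω 1 : ℝ)) - ((x.1 : ℝ)) ≤ t}).toReal

/-- `F̲_a(t) = sup_{x ≤ a} F_x(t)`, where `F_x(y) = P_x(S_1 - x ≤ y)`. -/
noncomputable def Funder (C : ARProcess) (a t : ℝ) : ℝ :=
  ⨆ x : {x : ↥C.E // (x : ℝ) ≤ a},
    ((C.P x.1) {ω | ((ω 1 : ℝ)) - ((x.1 : ℝ)) ≤ t}).toReal

/-- The integrability condition: `∫ t dF̄_a(t) < ∞` for some `a`, expressed (via Fubini, `F̄_a`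
vanishing on the negative half-line) as integrability of `1 - F̄_a` on `(0, ∞)`. -/
def IntegrabilityCondition (C : ARProcess) : Prop :=
  ∃ a : ℝ, IntegrableOn (fun t => 1 - Fbar C a t) (Set.Ioi (0 : ℝ))

/-- The hitting time `τ(d) = inf{t : S_t ≥ d}` of `[d, ∞)` (junk value `0` if the path never
reaches `[d, ∞)`). -/
noncomputable def hitTime {E : Set ℝ} (d : ℝ) (ω : ℕ → ↥E) : ℕ :=
  sInf {t : ℕ | d ≤ ((ω t : ℝ))}

/-- Total variation distance `Σ_z |P({z}) - Q({z})|` between two measures on a countable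
(state) space. -/
noncomputable def dTV {α : Type*} [MeasurableSpace α] (μ ν : Measure α) : ℝ :=
  ∑' z : α, |(μ {z}).toReal - (ν {z}).toReal|


/-!
Choose a continuity point `ε > 0` of `F` with `F ε < 1`. Weak convergence gives `ρ < 1` and `a₀`
such that from every state `w ≤ a₀` a jump of size at most `ε` has probability at most `ρ`. Paths
increase, so a visit to a unit interval `(b - 1, b]` with `b ≤ a₀` is followed, with probability
at least `1 - ρ`, by a jump `> ε`, and `⌊1/ε⌋₊ + 1` such jumps leave the interval. Hence
`(1 - ρ)⁻¹ · jumpsToExceed ε b` is a Lyapunov function which bounds the expected number of visits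
to `(b - 1, b]` by `(1 - ρ)⁻¹ (⌊1/ε⌋₊ + 1)`. The theorem follows, with `a* = a₀ - 1`, by
summing over the unit intervals that meet `[y, z]`.
-/

open scoped ENNReal

section PathPrefix

variable {α : Type*}

def pathPrefix (n : ℕ) (ω : ℕ → α) : Fin (n + 1) → α := fun i => ω i

theorem pathPrefix_succ (n : ℕ) (ω : ℕ → α) :
    pathPrefix (n + 1) ω = Fin.snoc (pathPrefix n ω) (ω (n + 1)) := by
  funext i
  refine Fin.lastCases ?_ (fun j => ?_) i <;> simp [pathPrefix]

theorem setOf_forall_le_eq_preimage_pathPrefix (n : ℕ) (p : ℕ → α) :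
    {ω : ℕ → α | ∀ i ≤ n, ω i = p i} = pathPrefix n ⁻¹' {pathPrefix n p} := by
  ext ω
  simp [pathPrefix, funext_iff, Fin.forall_iff]

theorem pathPrefix_clamp (n : ℕ) (q : Fin (n + 1) → α) :
    pathPrefix n (fun i => q (Fin.clamp i n)) = q := by
  funext i
  simp [pathPrefix, Fin.clamp, Nat.min_eq_left (Nat.lt_succ_iff.mp i.2)]

theorem measurable_pathPrefix [MeasurableSpace α] (n : ℕ) :
    Measurable (pathPrefix n : (ℕ → α) → Fin (n + 1) → α) :=
  measurable_pi_lambda _ fun _ => measurable_pi_apply _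

end PathPrefix

/-- For `r ≤ b`, the least number of jumps of size `> ε` that carry `r` above `b`, capped at its
value `⌊1/ε⌋₊ + 1` at `r = b - 1`. -/
noncomputable def jumpsToExceed (ε b r : ℝ) : ℕ := min (⌊1 / ε⌋₊ + 1) ⌊(b - r) / ε + 1⌋₊

section JumpsToExceed

variable {ε b : ℝ}

theorem jumpsToExceed_antitone (hε : 0 < ε) : Antitone (jumpsToExceed ε b) := fun r s hrs =>
  min_le_min_left _ <| Nat.floor_mono <| by gcongr

theorem jumpsToExceed_le (r : ℝ) : jumpsToExceed ε b r ≤ ⌊1 / ε⌋₊ + 1 := min_le_left _ _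

theorem jumpsToExceed_eq_floor (hε : 0 < ε) {r : ℝ} (hr : r ∈ Set.Ioc (b - 1) b) :
    jumpsToExceed ε b r = ⌊(b - r) / ε + 1⌋₊ := by
  refine min_eq_right ?_
  rw [Nat.floor_add_one (div_nonneg (sub_nonneg.2 hr.2) hε.le), Nat.add_le_add_iff_right]
  exact Nat.floor_mono (by gcongr; linarith [hr.1])

theorem one_le_jumpsToExceed (hε : 0 < ε) {r : ℝ} (hr : r ∈ Set.Ioc (b - 1) b) :
    1 ≤ jumpsToExceed ε b r := by
  rw [jumpsToExceed_eq_floor hε hr]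
  exact Nat.le_floor (by push_cast; linarith [div_nonneg (sub_nonneg.2 hr.2) hε.le])

theorem jumpsToExceed_le_pred_add (hε : 0 < ε) {r s : ℝ} (hr : r ∈ Set.Ioc (b - 1) b)
    (hrs : r < s) :
    jumpsToExceed ε b s ≤ jumpsToExceed ε b r - 1 + if s ≤ r + ε then 1 else 0 := by
  have hone := one_le_jumpsToExceed hε hr
  split_ifs with hsmall
  · have := jumpsToExceed_antitone (b := b) hε hrs.le
    omega
  · refine (min_le_right _ _).trans ?_
    rw [jumpsToExceed_eq_floor hε hr, add_zero, ← Nat.floor_sub_one]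
    refine Nat.floor_mono ?_
    rw [add_sub_cancel_right, div_add_one hε.ne', div_le_div_iff_of_pos_right hε]
    linarith [not_le.1 hsmall]

end JumpsToExceed

theorem le_sum_iSup_Ioc_mul_indicator (f : ℝ → ℝ≥0∞) {y z r : ℝ} (hy : y ≤ r) (hz : r ≤ z) :
    f r ≤ ∑ n ∈ Finset.Icc ⌊y⌋ ⌈z⌉, (⨆ t ∈ Set.Ioc ((n : ℝ) - 1) n, f t) *
      (Set.Ioc ((n : ℝ) - 1) n).indicator (fun _ => 1) r := by
  have hr : r ∈ Set.Ioc ((⌈r⌉ : ℝ) - 1) ⌈r⌉ := ⟨by linarith [Int.ceil_lt_add_one r], Int.le_ceil r⟩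
  have hmem : ⌈r⌉ ∈ Finset.Icc ⌊y⌋ ⌈z⌉ :=
    Finset.mem_Icc.2 ⟨(Int.floor_mono hy).trans (Int.floor_le_ceil r), Int.ceil_mono hz⟩
  refine le_trans ?_ (Finset.single_le_sum (fun n _ => zero_le) hmem)
  rw [Set.indicator_of_mem hr, mul_one]
  exact le_biSup f hr

namespace ARProcess

variable (C : ARProcess)

instance : Countable C.E := C.countable.to_subtype

instance (x : C.E) : IsProbabilityMeasure (C.P x) := C.prob x

theorem measure_pathPrefix_snoc (x : C.E) (t : ℕ) (r : Fin (t + 1) → C.E) (v : C.E) :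
    C.P x (pathPrefix (t + 1) ⁻¹' {Fin.snoc r v})
      = C.P x (pathPrefix t ⁻¹' {r}) * C.κ (r (Fin.last t)) v := by
  set p : ℕ → C.E := fun i => (Fin.snoc r v : Fin (t + 2) → C.E) (Fin.clamp i (t + 1))
  have hp : pathPrefix (t + 1) p = Fin.snoc r v := pathPrefix_clamp _ _
  rw [pathPrefix_succ, Fin.snoc_inj] at hp
  have hpt : p t = r (Fin.last t) := by rw [← hp.1]; rfl
  have := C.markov x t p
  rwa [setOf_forall_le_eq_preimage_pathPrefix, setOf_forall_le_eq_preimage_pathPrefix,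
    pathPrefix_succ, hp.1, hp.2, hpt] at this

theorem measure_eval_eq_and_eval_succ_eq (x : C.E) (t : ℕ) (w v : C.E) :
    C.P x {ω | ω t = w ∧ ω (t + 1) = v} = C.P x {ω | ω t = w} * C.κ w v := by
  set s : Set (Fin (t + 1) → C.E) := {r | r (Fin.last t) = w}
  have hset : {ω : ℕ → C.E | ω t = w ∧ ω (t + 1) = v}
      = ⋃ r ∈ s, pathPrefix (t + 1) ⁻¹' {Fin.snoc r v} := by
    ext ω
    simp only [Set.mem_ofPred_eq, Set.mem_iUnion, Set.mem_preimage, Set.mem_singleton_iff,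
      pathPrefix_succ, Fin.snoc_inj, exists_prop, s]
    constructor
    · rintro ⟨rfl, rfl⟩
      exact ⟨pathPrefix t ω, rfl, rfl, rfl⟩
    · rintro ⟨r, rfl, rfl, rfl⟩
      exact ⟨rfl, rfl⟩
  have hdisj : s.PairwiseDisjoint fun r => pathPrefix (t + 1) ⁻¹' {Fin.snoc r v} :=
    fun r _ r' _ hne => (Set.disjoint_singleton.2 fun h => hne (Fin.snoc_inj.1 h).1).preimage _
  rw [hset, measure_biUnion s.to_countable hdisj fun _ _ => MeasurableSet.of_discrete.preimage
    (measurable_pathPrefix _)]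
  calc ∑' r : s, C.P x (pathPrefix (t + 1) ⁻¹' {Fin.snoc (r : Fin (t + 1) → C.E) v})
      = ∑' r : s, C.P x (pathPrefix t ⁻¹' {(r : Fin (t + 1) → C.E)}) * C.κ w v := by
        refine tsum_congr fun r => ?_
        rw [measure_pathPrefix_snoc, r.2]
    _ = C.P x {ω | ω t = w} * C.κ w v := by
        rw [ENNReal.tsum_mul_right, tsum_measure_preimage_singleton s.to_countable
          fun _ _ => MeasurableSet.of_discrete.preimage (measurable_pathPrefix _)]
        rfl

theorem lintegral_comp_eval (x : C.E) (t : ℕ) (g : C.E → ℝ≥0∞) :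
    ∫⁻ ω, g (ω t) ∂C.P x = ∑' w, g w * C.P x {ω | ω t = w} := by
  rw [← lintegral_map Measurable.of_discrete (measurable_pi_apply t), lintegral_countable']
  refine tsum_congr fun w => ?_
  rw [Measure.map_apply (measurable_pi_apply t) (measurableSet_singleton w)]
  rfl

theorem ae_eval_zero_eq (x : C.E) : ∀ᵐ ω ∂C.P x, ω 0 = x :=
  mem_ae_iff.2 ((prob_compl_eq_zero_iff (by measurability)).2 (C.init x))

theorem ae_strictMono (x : C.E) : ∀ᵐ ω ∂C.P x, StrictMono fun t => (ω t : ℝ) := by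
  have hnull : C.P x (⋃ t, {ω : ℕ → C.E | (ω (t + 1) : ℝ) ≤ ω t}) = 0 :=
    measure_iUnion_null (C.inc_pos x)
  filter_upwards [measure_eq_zero_iff_ae_notMem.1 hnull] with ω hω
  refine strictMono_nat_of_lt_succ fun t => not_le.1 fun h => hω ?_
  exact Set.mem_iUnion.2 ⟨t, h⟩

theorem lintegral_comp_eval_succ (x : C.E) (t : ℕ) (f : C.E → ℝ≥0∞) :
    ∫⁻ ω, f (ω (t + 1)) ∂C.P x
      = ∫⁻ ω, ∑' v, (if ω t < v then C.κ (ω t) v * f v else 0) ∂C.P x := by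
  have hlaw : ∀ v, C.P x {ω | ω (t + 1) = v}
      = ∑' w, if w < v then C.P x {ω | ω t = w} * C.κ w v else 0 := by
    intro v
    have hpart : {ω : ℕ → C.E | ω (t + 1) = v} = ⋃ w, {ω | ω t = w ∧ ω (t + 1) = v} := by
      ext ω; simp
    rw [hpart, measure_iUnion (fun w w' hne => Set.disjoint_left.2 fun ω h h' => hne (h.1 ▸ h'.1))
      fun _ => by measurability]
    refine tsum_congr fun w => ?_
    split_ifs with hwv
    · exact C.measure_eval_eq_and_eval_succ_eq x t w v
    · refine measure_mono_null (fun ω hω => ?_) (C.inc_pos x t)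
      simp only [Set.mem_ofPred_eq] at hω ⊢
      rw [hω.1, hω.2]
      exact not_lt.1 hwv
  rw [lintegral_comp_eval,
    C.lintegral_comp_eval x t fun w => ∑' v, if w < v then C.κ w v * f v else 0]
  simp_rw [hlaw, ← ENNReal.tsum_mul_left, ← ENNReal.tsum_mul_right]
  rw [ENNReal.tsum_comm]
  refine tsum_congr fun w => tsum_congr fun v => ?_
  split_ifs <;> ring

theorem lintegral_comp_eval_zero (x : C.E) (g : C.E → ℝ≥0∞) : ∫⁻ ω, g (ω 0) ∂C.P x = g x := by
  rw [lintegral_congr_ae ((C.ae_eval_zero_eq x).mono fun ω h => congrArg g h), lintegral_const,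
    measure_univ, mul_one]

theorem tsum_lintegral_le_of_drift {g V : C.E → ℝ≥0∞}
    (hdrift : ∀ w, g w + ∑' v, (if w < v then C.κ w v * V v else 0) ≤ V w) (x : C.E) :
    ∑' t, ∫⁻ ω, g (ω t) ∂C.P x ≤ V x := by
  have hstep : ∀ t, ∫⁻ ω, g (ω t) ∂C.P x + ∫⁻ ω, V (ω (t + 1)) ∂C.P x
      ≤ ∫⁻ ω, V (ω t) ∂C.P x := by
    intro t
    have hg : Measurable fun ω : ℕ → C.E => g (ω t) :=
      Measurable.of_discrete.comp (measurable_pi_apply t)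
    rw [lintegral_comp_eval_succ, ← lintegral_add_left hg]
    exact lintegral_mono fun ω => hdrift (ω t)
  have hpartial : ∀ T, ∑ t ∈ Finset.range T, ∫⁻ ω, g (ω t) ∂C.P x + ∫⁻ ω, V (ω T) ∂C.P x
      ≤ V x := by
    intro T
    induction T with
    | zero => simp [lintegral_comp_eval_zero]
    | succ T ih =>
      calc _ = ∑ t ∈ Finset.range T, ∫⁻ ω, g (ω t) ∂C.P x
            + (∫⁻ ω, g (ω T) ∂C.P x + ∫⁻ ω, V (ω (T + 1)) ∂C.P x) := by
            rw [Finset.sum_range_succ, add_assoc]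
        _ ≤ V x := le_trans (add_le_add_right (hstep T) _) ih
  exact ENNReal.tsum_le_of_sum_range_le fun T => le_trans le_self_add (hpartial T)

theorem tsum_kernel_eq_lintegral (w : C.E) (f : C.E → ℝ≥0∞) :
    ∑' v, (if w < v then C.κ w v * f v else 0) = ∫⁻ ω, f (ω 1) ∂C.P w := by
  rw [C.lintegral_comp_eval_succ w 0 f,
    C.lintegral_comp_eval_zero w fun u => ∑' v, if u < v then C.κ u v * f v else 0]

theorem tsum_kernel_le_one (w : C.E) : ∑' v, (if w < v then C.κ w v else 0) ≤ 1 :=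
  (C.κprob w).le.trans' <| ENNReal.tsum_le_tsum fun v => by split_ifs <;> simp

theorem tsum_kernel_mul_jumpsToExceed_le {ε b : ℝ} {ρ : ℝ≥0∞} (hε : 0 < ε) {w : C.E}
    (hw : (w : ℝ) ∈ Set.Ioc (b - 1) b)
    (hjump : ∑' v, (if w < v then C.κ w v * {v : C.E | (v : ℝ) ≤ w + ε}.indicator (fun _ => 1) v
      else 0) ≤ ρ) :
    ∑' v, (if w < v then C.κ w v * jumpsToExceed ε b v else 0)
      ≤ ((jumpsToExceed ε b w - 1 : ℕ) : ℝ≥0∞) + ρ := by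
  set k := jumpsToExceed ε b w - 1
  calc _ ≤ ∑' v, ((if w < v then C.κ w v else 0) * k + if w < v then
          C.κ w v * {v : C.E | (v : ℝ) ≤ w + ε}.indicator (fun _ => 1) v else 0) := by
        refine ENNReal.tsum_le_tsum fun v => ?_
        split_ifs with hwv
        · have hv := jumpsToExceed_le_pred_add hε hw (Subtype.coe_lt_coe.2 hwv)
          rw [← mul_add]
          gcongr
          simp only [Set.indicator_apply, Set.mem_ofPred_eq]
          split_ifs at hv ⊢ <;> exact_mod_cast hv
        · simp
    _ = (∑' v, if w < v then C.κ w v else 0) * k + ∑' v, if w < v then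
          C.κ w v * {v : C.E | (v : ℝ) ≤ w + ε}.indicator (fun _ => 1) v else 0 := by
        rw [ENNReal.tsum_add, ENNReal.tsum_mul_right]
    _ ≤ k + ρ := by
        gcongr
        exact mul_le_of_le_one_left' (C.tsum_kernel_le_one w)

theorem indicator_add_tsum_kernel_jumpsToExceed_le {ε b : ℝ} {ρ : ℝ≥0∞} (hε : 0 < ε)
    (hρ : ρ < 1)
    (hjump : ∀ w : C.E, (w : ℝ) ∈ Set.Ioc (b - 1) b →
      ∑' v, (if w < v then C.κ w v * {v : C.E | (v : ℝ) ≤ w + ε}.indicator (fun _ => 1) v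
        else 0) ≤ ρ)
    (w : C.E) :
    (Set.Ioc (b - 1) b).indicator (fun _ => 1) (w : ℝ)
        + ∑' v, (if w < v then C.κ w v * ((1 - ρ)⁻¹ * jumpsToExceed ε b v) else 0)
      ≤ (1 - ρ)⁻¹ * jumpsToExceed ε b w := by
  set c := (1 - ρ)⁻¹
  have hpull : ∑' v, (if w < v then C.κ w v * (c * jumpsToExceed ε b v) else 0)
      = c * ∑' v, (if w < v then C.κ w v * jumpsToExceed ε b v else 0) := by
    rw [← ENNReal.tsum_mul_left]
    exact tsum_congr fun v => by split_ifs <;> ring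
  rw [hpull]
  by_cases hw : (w : ℝ) ∈ Set.Ioc (b - 1) b
  · have hc : c * (1 - ρ) = 1 := ENNReal.inv_mul_cancel (tsub_pos_of_lt hρ).ne' (by simp)
    calc _ ≤ c * (1 - ρ) + c * (((jumpsToExceed ε b w - 1 : ℕ) : ℝ≥0∞) + ρ) := by
          rw [Set.indicator_of_mem hw, hc]
          gcongr
          exact C.tsum_kernel_mul_jumpsToExceed_le hε hw (hjump w hw)
      _ = c * ((1 - ρ + ρ) + ((jumpsToExceed ε b w - 1 : ℕ) : ℝ≥0∞)) := by ring
      _ = c * jumpsToExceed ε b w := by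
          rw [tsub_add_cancel_of_le hρ.le, add_comm, ← Nat.cast_add_one,
            Nat.sub_add_cancel (one_le_jumpsToExceed hε hw)]
  · rw [Set.indicator_of_notMem hw, zero_add]
    gcongr
    calc _ ≤ ∑' v, (if w < v then C.κ w v else 0) * jumpsToExceed ε b w := by
          refine ENNReal.tsum_le_tsum fun v => ?_
          split_ifs with hwv
          · gcongr
            exact jumpsToExceed_antitone hε (Subtype.coe_le_coe.2 hwv.le)
          · simp
      _ ≤ jumpsToExceed ε b w := by
          rw [ENNReal.tsum_mul_right]
          exact mul_le_of_le_one_left' (C.tsum_kernel_le_one w)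

theorem tsum_lintegral_indicator_Ioc_le {ε b : ℝ} {ρ : ℝ≥0∞} (hε : 0 < ε) (hρ : ρ < 1)
    (hjump : ∀ w : C.E, (w : ℝ) ∈ Set.Ioc (b - 1) b → C.P w {ω | (ω 1 : ℝ) ≤ w + ε} ≤ ρ)
    (x : C.E) :
    ∑' t, ∫⁻ ω, (Set.Ioc (b - 1) b).indicator (fun _ => 1) (ω t : ℝ) ∂C.P x
      ≤ (1 - ρ)⁻¹ * (⌊1 / ε⌋₊ + 1) := by
  have hdrift := C.indicator_add_tsum_kernel_jumpsToExceed_le hε hρ fun w hw => by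
    rw [tsum_kernel_eq_lintegral, lintegral_indicator_const_comp (measurable_pi_apply 1)
      MeasurableSet.of_discrete, one_mul]
    exact hjump w hw
  calc _ ≤ (1 - ρ)⁻¹ * jumpsToExceed ε b x := C.tsum_lintegral_le_of_drift hdrift x
    _ ≤ (1 - ρ)⁻¹ * (⌊1 / ε⌋₊ + 1) := by
        gcongr
        exact_mod_cast jumpsToExceed_le (x : ℝ)

theorem lintegral_tsum_between_le_sum_iSup_mul (x : C.E) (f : ℝ → ℝ≥0∞) (y z : ℝ) :
    ∫⁻ ω, ∑' t, (if (∃ s ≤ t, y ≤ (ω s : ℝ)) ∧ (∀ s ≤ t, (ω s : ℝ) < z) then f (ω t) else 0)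
        ∂C.P x
      ≤ ∑ n ∈ Finset.Icc ⌊y⌋ ⌈z⌉, (⨆ t ∈ Set.Ioc ((n : ℝ) - 1) n, f t) *
          ∑' t, ∫⁻ ω, (Set.Ioc ((n : ℝ) - 1) n).indicator (fun _ => 1) (ω t : ℝ) ∂C.P x := by
  set I : ℤ → Set ℝ := fun n => Set.Ioc ((n : ℝ) - 1) n
  set a : ℤ → ℝ≥0∞ := fun n => ⨆ t ∈ I n, f t
  have hind : ∀ n t, Measurable fun ω : ℕ → C.E =>
      (I n).indicator (fun _ => (1 : ℝ≥0∞)) (ω t : ℝ) := fun n t =>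
    (measurable_const.indicator measurableSet_Ioc).comp (by fun_prop)
  calc _ ≤ ∫⁻ ω, ∑' t, ∑ n ∈ Finset.Icc ⌊y⌋ ⌈z⌉, a n * (I n).indicator (fun _ => 1) (ω t : ℝ)
          ∂C.P x := by
        refine lintegral_mono_ae ((C.ae_strictMono x).mono fun ω hω =>
          ENNReal.tsum_le_tsum fun t => ?_)
        split_ifs with h
        · obtain ⟨⟨s, hst, hys⟩, hz⟩ := h
          exact le_sum_iSup_Ioc_mul_indicator f (hys.trans (hω.monotone hst)) (hz t le_rfl).le
        · exact zero_le
    _ = _ := by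
        rw [lintegral_tsum fun t => (Finset.measurable_sum _ fun n _ =>
          (hind n t).const_mul (a n)).aemeasurable]
        simp_rw [lintegral_finsetSum _ fun n _ => (hind n _).const_mul (a n),
          lintegral_const_mul _ (hind _ _)]
        rw [Summable.tsum_finsetSum fun _ _ => ENNReal.summable]
        simp_rw [ENNReal.tsum_mul_left]
        rfl

theorem exists_small_jump_prob_le : ∃ ε > 0, ∃ ρ < 1, ∃ a₀ : ℝ,
    ∀ w : C.E, (w : ℝ) ≤ a₀ → C.P w {ω | (ω 1 : ℝ) ≤ w + ε} ≤ ρ := by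
  obtain ⟨t₀, ht₀, hFt₀⟩ : ∃ t₀ > 0, C.F t₀ < 1 := by
    by_contra! h
    exact (setIntegral_nonpos measurableSet_Ioi fun t ht => sub_nonpos.2 (h t ht)).not_gt
      C.mean_pos
  obtain ⟨ε, hεc, hε⟩ := (C.F_mono.countable_not_continuousAt.dense_compl ℝ).exists_mem_open
    isOpen_Ioo (Set.nonempty_Ioo.2 ht₀)
  obtain ⟨r, hFr, hr⟩ := exists_between ((C.F_mono hε.2.le).trans_lt hFt₀)
  obtain ⟨a₀, ha₀⟩ := eventually_atBot.1 <| eventually_comap.1 <|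
    (C.F_conv ε (not_not.1 hεc)).eventually_lt_const hFr
  refine ⟨ε, hε.1, ENNReal.ofReal r, ENNReal.ofReal_lt_one.2 hr, a₀, fun w hw => ?_⟩
  have hset : {ω : ℕ → C.E | (ω 1 : ℝ) ≤ w + ε} = {ω | (ω 1 : ℝ) - w ≤ ε} := by
    ext ω; simp [add_comm]
  rw [hset, ← ENNReal.ofReal_toReal (measure_ne_top _ _)]
  exact ENNReal.ofReal_le_ofReal (ha₀ w hw w rfl).le

end ARProcess

-- The time range `τ(y) ≤ t < τ(z)` is encoded as "`[y, ∞)` has been reached by time `t`, but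
-- `[z, ∞)` has not".
/-- (Lemma 3.4 of Bruhn.)  For an AR-process there are `a* ∈ ℝ` and
`û > 0` such that for every measurable `l : ℝ → [0,∞)`, all `y < z < a*` and every state
`x < y`, `E_x[Σ_{t=τ(y)}^{τ(z)-1} l(S_t)] ≤ û·Σ_{n=⌊y⌋}^{⌈z⌉} sup_{t ∈ (n-1,n]} l(t)`
(the time range `τ(y) ≤ t < τ(z)` is expressed by "`[y,∞)` has been reached by time `t` but
`[z,∞)` has not"). -/
theorem stmt7 (C : ARProcess) :
    ∃ (astar : ℝ) (u : ℝ), 0 < u ∧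
      ∀ l : ℝ → ℝ, Measurable l → (∀ t, 0 ≤ l t) →
      ∀ (y z : ℝ) (x : ↥C.E), (x : ℝ) < y → y < z → z < astar →
        (∫⁻ ω, ∑' t : ℕ,
            (if (∃ s ≤ t, y ≤ ((ω s : ℝ))) ∧ (∀ s ≤ t, ((ω s : ℝ)) < z)
              then ENNReal.ofReal (l ((ω t : ℝ))) else 0) ∂(C.P x))
          ≤ ENNReal.ofReal u *
              ∑ n ∈ Finset.Icc (Int.floor y) (Int.ceil z),
                ⨆ t ∈ Set.Ioc ((n : ℝ) - 1) (n : ℝ), ENNReal.ofReal (l t) := by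
  obtain ⟨ε, hε, ρ, hρ, a₀, hjump⟩ := C.exists_small_jump_prob_le
  set U : ℝ≥0∞ := (1 - ρ)⁻¹ * (⌊1 / ε⌋₊ + 1)
  have hU : U ≠ ⊤ := ENNReal.mul_ne_top (ENNReal.inv_ne_top.2 (tsub_pos_of_lt hρ).ne') (by simp)
  refine ⟨a₀ - 1, U.toReal, ENNReal.toReal_pos (by simp [U]) hU,
    fun l _ _ y z x _ _ hza => ?_⟩
  rw [ENNReal.ofReal_toReal hU]
  calc _ ≤ _ := C.lintegral_tsum_between_le_sum_iSup_mul x (fun t => ENNReal.ofReal (l t)) y z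
    _ ≤ ∑ n ∈ Finset.Icc ⌊y⌋ ⌈z⌉, (⨆ t ∈ Set.Ioc ((n : ℝ) - 1) n, ENNReal.ofReal (l t)) * U := by
        refine Finset.sum_le_sum fun n hn => mul_le_mul_right ?_ _
        refine C.tsum_lintegral_indicator_Ioc_le hε hρ (fun w hw => hjump w ?_) x
        linarith [hw.2, (Int.cast_le (R := ℝ)).2 (Finset.mem_Icc.1 hn).2, Int.ceil_lt_add_one z]
    _ = U * _ := by rw [← Finset.sum_mul, mul_comm]
end

section
/- As n → ∞, E[I_n·log I_n] = (1/b)·n·log n + E[V·log V]·n + o(n). -/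
/-!
Given `V = p`, the variable `K = I n - s₁` is binomial `Bin(m, p)` with `m = n - s₀ - b s₁`.
Writing `k log k = k log m + m φ(k/m)` with `φ x = x log x` gives
`𝔼[K log K] = m p log m + m 𝔼[φ(K/m)]`, and `𝔼[φ(K/m)]` is the Bernstein approximation of `φ`
at `p`, which converges to `φ p` uniformly on `[0, 1]`. The shift by `s₁` and the passage from
`m` to `n` cost only `O(log n)`, because `0 ≤ (j + c) log (j + c) - j log j ≤ c log (j + c) + c`.
Integrating over `V` and using `𝔼 V = 1/b` gives the expansion.
-/

open MeasureTheory Filter Topology Asymptotics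

open Real Finset

noncomputable def binomialMean (m : ℕ) (f : ℕ → ℝ) (p : ℝ) : ℝ :=
  ∑ k ∈ range (m + 1), f k * (bernsteinPolynomial ℝ m k).eval p

lemma eval_bernsteinPolynomial (m k : ℕ) (p : ℝ) :
    (bernsteinPolynomial ℝ m k).eval p = m.choose k * p ^ k * (1 - p) ^ (m - k) := by
  simp [bernsteinPolynomial]

lemma eval_bernsteinPolynomial_nonneg (m k : ℕ) {p : ℝ} (hp : p ∈ Set.Icc 0 1) :
    0 ≤ (bernsteinPolynomial ℝ m k).eval p :=
  bernstein_nonneg (x := ⟨p, hp⟩)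

lemma sum_eval_bernsteinPolynomial (m : ℕ) (p : ℝ) :
    ∑ k ∈ range (m + 1), (bernsteinPolynomial ℝ m k).eval p = 1 := by
  simpa [Polynomial.eval_finsetSum] using
    congrArg (Polynomial.eval p) (bernsteinPolynomial.sum ℝ m)

lemma binomialMean_natCast (m : ℕ) (p : ℝ) : binomialMean m (fun k => k) p = m * p := by
  simpa [Polynomial.eval_finsetSum, binomialMean] using
    congrArg (Polynomial.eval p) (bernsteinPolynomial.sum_smul ℝ m)

lemma abs_binomialMean_sub_le {m : ℕ} {f g : ℕ → ℝ} {C p : ℝ} (hp : p ∈ Set.Icc 0 1)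
    (hfg : ∀ k ≤ m, |f k - g k| ≤ C) : |binomialMean m f p - binomialMean m g p| ≤ C := by
  have hB := fun k => eval_bernsteinPolynomial_nonneg m k hp
  calc |binomialMean m f p - binomialMean m g p|
      = |∑ k ∈ range (m + 1), (f k - g k) * (bernsteinPolynomial ℝ m k).eval p| := by
        simp only [binomialMean, ← sum_sub_distrib, sub_mul]
    _ ≤ ∑ k ∈ range (m + 1), C * (bernsteinPolynomial ℝ m k).eval p := by
        refine (abs_sum_le_sum_abs _ _).trans (sum_le_sum fun k hk => ?_)
        rw [abs_mul, abs_of_nonneg (hB k)]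
        exact mul_le_mul_of_nonneg_right (hfg k (Nat.lt_succ_iff.mp (mem_range.mp hk))) (hB k)
    _ = C := by rw [← mul_sum, sum_eval_bernsteinPolynomial, mul_one]

lemma continuous_binomialMean (m : ℕ) (f : ℕ → ℝ) : Continuous (binomialMean m f) := by
  unfold binomialMean
  fun_prop

theorem tendstoUniformlyOn_binomialMean {g : ℝ → ℝ} (hg : Continuous g) :
    TendstoUniformlyOn (fun m : ℕ => binomialMean m fun k => g (k / m)) g atTop
      (Set.Icc 0 1) := by
  have h := bernsteinApproximation_uniform ⟨fun x : unitInterval => g x, by fun_prop⟩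
  rw [ContinuousMap.tendsto_iff_tendstoUniformly] at h
  rw [tendstoUniformlyOn_iff_tendstoUniformly_comp_coe]
  convert h using 1
  · funext m x
    rw [bernsteinApproximation.apply, binomialMean,
      ← Fin.sum_univ_eq_sum_range fun k => g (k / m) * (bernsteinPolynomial ℝ m k).eval x.1]
    simp only [bernstein, Polynomial.toContinuousMapOn_apply, Polynomial.toContinuousMap_apply,
      bernstein.z, ContinuousMap.coe_mk, smul_eq_mul, mul_comm]
  · rfl

lemma mul_log_eq_mul_log_add_mul_mul_log_div (x : ℝ) {y : ℝ} (hy : y ≠ 0) :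
    x * log x = x * log y + y * (x / y * log (x / y)) := by
  rcases eq_or_ne x 0 with rfl | hx
  · simp
  · rw [log_div hx hy]
    field_simp
    ring

lemma binomialMean_mul_log (m : ℕ) (p : ℝ) :
    binomialMean m (fun k => k * log k) p
      = log m * (m * p) + m * binomialMean m (fun k => k / m * log (k / m)) p := by
  rcases eq_or_ne m 0 with rfl | hm
  · simp [binomialMean]
  rw [← binomialMean_natCast, binomialMean, binomialMean, binomialMean, mul_sum, mul_sum,
    ← sum_add_distrib]
  refine sum_congr rfl fun k _ => ?_
  rw [mul_log_eq_mul_log_add_mul_mul_log_div (k : ℝ) (Nat.cast_ne_zero.mpr hm)]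
  ring

lemma eventually_abs_binomialMean_mul_log_sub_le {ε : ℝ} (hε : 0 < ε) :
    ∀ᶠ m : ℕ in atTop, ∀ p ∈ Set.Icc (0 : ℝ) 1,
      |binomialMean m (fun k => k * log k) p - (m * log m * p + m * (p * log p))| ≤ ε * m := by
  filter_upwards [Metric.tendstoUniformlyOn_iff.mp
    (tendstoUniformlyOn_binomialMean continuous_mul_log) ε hε] with m hm p hp
  have hdist := hm p hp
  rw [Real.dist_eq, abs_sub_comm] at hdist
  calc |binomialMean m (fun k => k * log k) p - (m * log m * p + m * (p * log p))|
      = |m * (binomialMean m (fun k => k / m * log (k / m)) p - p * log p)| := by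
        rw [binomialMean_mul_log]
        congr 1
        ring
    _ = m * |binomialMean m (fun k => k / m * log (k / m)) p - p * log p| := by
        rw [abs_mul, Nat.abs_cast]
    _ ≤ ε * m := by rw [mul_comm]; gcongr

lemma abs_mul_log_add_sub_mul_log_le (j c : ℕ) :
    |((j : ℝ) + c) * log (j + c) - j * log j| ≤ c * log (j + c) + c := by
  have hlog : 0 ≤ log ((j : ℝ) + c) := by exact_mod_cast log_natCast_nonneg (j + c)
  rcases j.eq_zero_or_pos with rfl | hj
  · simp only [Nat.cast_zero, zero_add, zero_mul, sub_zero] at hlog ⊢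
    rw [abs_of_nonneg (by positivity)]
    linarith [Nat.cast_nonneg (α := ℝ) c]
  have hj' : (0 : ℝ) < j := by exact_mod_cast hj
  have hsplit : ((j : ℝ) + c) * log (j + c) - j * log j
      = c * log (j + c) + j * log ((j + c) / j) := by
    rw [log_div (by positivity) hj'.ne']
    ring
  have hratio_nonneg : 0 ≤ j * log (((j : ℝ) + c) / j) := by
    apply mul_nonneg hj'.le (log_nonneg _)
    rw [le_div_iff₀ hj']
    linarith [Nat.cast_nonneg (α := ℝ) c]
  have hratio_le : j * log (((j : ℝ) + c) / j) ≤ c := by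
    calc j * log (((j : ℝ) + c) / j) ≤ j * ((j + c) / j - 1) :=
          mul_le_mul_of_nonneg_left (log_le_sub_one_of_pos (by positivity)) hj'.le
      _ = c := by field_simp; ring
  rw [hsplit, abs_of_nonneg (by positivity)]
  linarith

lemma isLittleO_const_mul_log_add_add_const (c : ℕ) :
    (fun m : ℕ => (c : ℝ) * log (m + c) + c) =o[atTop] fun m : ℕ => (m : ℝ) := by
  have hlog : (fun m : ℕ => log ((m : ℝ) + c)) =o[atTop] fun m : ℕ => (m : ℝ) + c :=
    isLittleO_log_id_atTop.comp_tendsto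
      (tendsto_atTop_add_const_right _ _ tendsto_natCast_atTop_atTop)
  have hconst : (fun _ : ℕ => (c : ℝ)) =o[atTop] fun m : ℕ => (m : ℝ) :=
    (isLittleO_const_id_atTop _).comp_tendsto tendsto_natCast_atTop_atTop
  have hlin : (fun m : ℕ => (m : ℝ) + c) =O[atTop] fun m : ℕ => (m : ℝ) :=
    (isBigO_refl _ _).add hconst.isBigO
  exact ((hlog.trans_isBigO hlin).const_mul_left _).add hconst

lemma isLittleO_mul_log_add_sub_mul_log (c : ℕ) :
    (fun m : ℕ => ((m : ℝ) + c) * log (m + c) - m * log m) =o[atTop] fun m : ℕ => (m : ℝ) :=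
  (isBigO_of_le _ fun m => (abs_mul_log_add_sub_mul_log_le m c).trans (le_abs_self _))
    |>.trans_isLittleO (isLittleO_const_mul_log_add_add_const c)

lemma eventually_abs_binomialMean_mul_log_add_sub_le (s : ℕ) {ε : ℝ} (hε : 0 < ε) :
    ∀ᶠ m : ℕ in atTop, ∀ p ∈ Set.Icc (0 : ℝ) 1,
      |binomialMean m (fun k => ((k + s : ℕ) : ℝ) * log ((k + s : ℕ) : ℝ)) p
        - (m * log m * p + m * (p * log p))| ≤ ε * m := by
  filter_upwards [eventually_abs_binomialMean_mul_log_sub_le (half_pos hε),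
    (isLittleO_const_mul_log_add_add_const s).bound (half_pos hε)] with m hmain hsmall p hp
  have hshift : |binomialMean m (fun k => ((k + s : ℕ) : ℝ) * log ((k + s : ℕ) : ℝ)) p
      - binomialMean m (fun k => k * log k) p| ≤ s * log (m + s) + s := by
    refine abs_binomialMean_sub_le hp fun k hk => ?_
    push_cast
    refine (abs_mul_log_add_sub_mul_log_le k s).trans ?_
    rcases s.eq_zero_or_pos with rfl | hs
    · simp
    have hk' : (k : ℝ) ≤ m := by exact_mod_cast hk
    have hs' : (0 : ℝ) < s := by exact_mod_cast hs
    gcongr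
  have hlog : 0 ≤ log ((m : ℝ) + s) := by exact_mod_cast log_natCast_nonneg (m + s)
  rw [Real.norm_eq_abs, Real.norm_natCast, abs_of_nonneg (by positivity)] at hsmall
  linarith [abs_sub_le (binomialMean m (fun k => ((k + s : ℕ) : ℝ) * log ((k + s : ℕ) : ℝ)) p)
    (binomialMean m (fun k => k * log k) p) (m * log m * p + m * (p * log p)), hmain p hp]

section Integration

variable {Ω : Type*} [MeasurableSpace Ω] {ℙ : Measure Ω}

lemma Continuous.integrable_comp_of_forall_mem {g : ℝ → ℝ} (hg : Continuous g) {K : Set ℝ}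
    (hK : IsCompact K) [IsFiniteMeasure ℙ] {V : Ω → ℝ} (hV : Measurable V)
    (hVK : ∀ ω, V ω ∈ K) :
    Integrable (fun ω => g (V ω)) ℙ := by
  obtain ⟨C, hC⟩ := hK.exists_bound_of_continuousOn hg.continuousOn
  exact Integrable.of_bound (hg.measurable.comp hV).aestronglyMeasurable C
    (ae_of_all _ fun ω => hC _ (hVK ω))

lemma integral_comp_eq_sum_of_sum_measureReal_eq_one {α E : Type*} [MeasurableSpace α]
    [MeasurableSingletonClass α] [NormedAddCommGroup E] [NormedSpace ℝ E] [CompleteSpace E]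
    [IsProbabilityMeasure ℙ] {X : Ω → α} (hX : Measurable X) {S : Finset α}
    (hS : ∑ a ∈ S, ℙ.real {ω | X ω = a} = 1) (f : α → E) :
    ∫ ω, f (X ω) ∂ℙ = ∑ a ∈ S, ℙ.real {ω | X ω = a} • f a := by
  have hmeas : ∀ a, MeasurableSet {ω | X ω = a} := fun a => hX (measurableSet_singleton a)
  have hS' : ℙ (X ⁻¹' S) = 1 := by
    have : ℙ.real (X ⁻¹' S) = 1 := by
      rw [← hS, ← measureReal_biUnion_finset]
      · congr 1; ext ω; simp
      · intro a _ a' _ haa'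
        exact Set.disjoint_left.mpr fun ω h h' => haa' (h.symm.trans h')
      · exact fun a _ => hmeas a
    simpa [measureReal_def, ENNReal.toReal_eq_one_iff] using this
  have hae : ∀ᵐ ω ∂ℙ, X ω ∈ S := by
    rw [ae_iff]
    exact (prob_compl_eq_zero_iff (hX S.measurableSet)).mpr hS'
  calc ∫ ω, f (X ω) ∂ℙ = ∫ ω, ∑ a ∈ S, {ω | X ω = a}.indicator (fun _ => f a) ω ∂ℙ := by
        refine integral_congr_ae (hae.mono fun ω hω => ?_)
        dsimp only
        rw [sum_eq_single_of_mem (X ω) hω fun a _ ha => ?_]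
        · exact (Set.indicator_of_mem (s := {ω | X ω = X ω}) rfl fun _ => f (X ω)).symm
        · exact Set.indicator_of_notMem (fun h : X ω = a => ha h.symm) _
    _ = ∑ a ∈ S, ℙ.real {ω | X ω = a} • f a := by
        rw [integral_finsetSum _ fun a _ => (integrable_const _).indicator (hmeas a)]
        simp only [integral_indicator_const _ (hmeas _)]

end Integration

section BinomialMixture

variable {Ω : Type*} [MeasurableSpace Ω] {ℙ : Measure Ω} [IsProbabilityMeasure ℙ]
  {V : Ω → ℝ} (hV : Measurable V) (hV01 : ∀ ω, V ω ∈ Set.Icc (0 : ℝ) 1)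
include hV hV01

lemma integral_comp_eq_integral_binomialMean {X : Ω → ℕ} (hX : Measurable X) {m s : ℕ}
    (hdist : ∀ k ≤ m,
      ℙ.real {ω | X ω = k + s} = ∫ ω, (bernsteinPolynomial ℝ m k).eval (V ω) ∂ℙ)
    (f : ℕ → ℝ) :
    ∫ ω, f (X ω) ∂ℙ = ∫ ω, binomialMean m (fun k => f (k + s)) (V ω) ∂ℙ := by
  have hint : ∀ k, Integrable (fun ω => (bernsteinPolynomial ℝ m k).eval (V ω)) ℙ :=
    fun k => (bernsteinPolynomial ℝ m k).continuous.integrable_comp_of_forall_mem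
      isCompact_Icc hV hV01
  have hdist' : ∀ k ∈ range (m + 1), ℙ.real {ω | X ω = k + s}
      = ∫ ω, (bernsteinPolynomial ℝ m k).eval (V ω) ∂ℙ :=
    fun k hk => hdist k (Nat.lt_succ_iff.mp (mem_range.mp hk))
  have hS : ∑ j ∈ (range (m + 1)).map (addRightEmbedding s), ℙ.real {ω | X ω = j} = 1 := by
    simp only [sum_map, addRightEmbedding_apply]
    rw [sum_congr rfl hdist', ← integral_finsetSum _ fun k _ => hint k]
    simp [sum_eval_bernsteinPolynomial]
  simp only [integral_comp_eq_sum_of_sum_measureReal_eq_one hX hS, sum_map,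
    addRightEmbedding_apply, binomialMean]
  rw [integral_finsetSum _ fun k _ => (hint k).const_mul _]
  refine sum_congr rfl fun k hk => ?_
  rw [integral_const_mul, ← hdist' k hk, smul_eq_mul, mul_comm]

theorem isLittleO_integral_mul_log_of_binomialMixture (s : ℕ) {X : ℕ → Ω → ℕ}
    (hX : ∀ m, Measurable (X m))
    (hdist : ∀ m, ∀ k ≤ m,
      ℙ.real {ω | X m ω = k + s} = ∫ ω, (bernsteinPolynomial ℝ m k).eval (V ω) ∂ℙ) :
    (fun m : ℕ => ∫ ω, (X m ω : ℝ) * log (X m ω) ∂ℙ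
        - (m * log m * ∫ ω, V ω ∂ℙ + m * ∫ ω, V ω * log (V ω) ∂ℙ))
      =o[atTop] fun m : ℕ => (m : ℝ) := by
  have hVint : Integrable V ℙ :=
    continuous_id.integrable_comp_of_forall_mem isCompact_Icc hV hV01
  have hφVint : Integrable (fun ω => V ω * log (V ω)) ℙ :=
    continuous_mul_log.integrable_comp_of_forall_mem isCompact_Icc hV hV01
  rw [isLittleO_iff]
  intro ε hε
  filter_upwards [eventually_abs_binomialMean_mul_log_add_sub_le s hε] with m hm
  have hmix := integral_comp_eq_integral_binomialMean hV hV01 (hX m) (hdist m)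
    fun j : ℕ => (j : ℝ) * log j
  have hHint : Integrable (fun ω => m * log m * V ω + m * (V ω * log (V ω))) ℙ :=
    (hVint.const_mul _).add (hφVint.const_mul _)
  have hlin : m * log m * ∫ ω, V ω ∂ℙ + m * ∫ ω, V ω * log (V ω) ∂ℙ
      = ∫ ω, (m * log m * V ω + m * (V ω * log (V ω))) ∂ℙ := by
    rw [integral_add (hVint.const_mul _) (hφVint.const_mul _), integral_const_mul,
      integral_const_mul]
  rw [hmix, hlin, ← integral_sub
    ((continuous_binomialMean _ _).integrable_comp_of_forall_mem isCompact_Icc hV hV01)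
    hHint]
  calc ‖∫ ω, (binomialMean m (fun k => ((k + s : ℕ) : ℝ) * log ((k + s : ℕ) : ℝ)) (V ω)
          - (m * log m * V ω + m * (V ω * log (V ω)))) ∂ℙ‖
      ≤ ε * m * ℙ.real Set.univ :=
        norm_integral_le_of_norm_le_const (ae_of_all _ fun ω => hm _ (hV01 ω))
    _ = ε * ‖(m : ℝ)‖ := by simp

end BinomialMixture

theorem stmt13_general
    (b s₀ s₁ : ℕ)
    {Ω : Type*} [MeasurableSpace Ω] (ℙ : Measure Ω) [IsProbabilityMeasure ℙ]
    (V : Ω → ℝ) (hVmeas : Measurable V)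
    (hV01 : ∀ ω, V ω ∈ Set.Icc (0:ℝ) 1)
    (hEV : (∫ ω, V ω ∂ℙ) = 1 / b)
    (I : ℕ → Ω → ℕ) (hImeas : ∀ n, Measurable (I n))
    (hIdist : ∀ n : ℕ, s₀ + b * s₁ ≤ n → ∀ k : ℕ, k ≤ n - s₀ - b * s₁ →
      (ℙ {ω | I n ω = k + s₁}).toReal
        = ∫ ω, ((n - s₀ - b * s₁).choose k : ℝ) * V ω ^ k
            * (1 - V ω) ^ (n - s₀ - b * s₁ - k) ∂ℙ) :
    (fun n : ℕ => (∫ ω, (I n ω : ℝ) * Real.log (I n ω) ∂ℙ)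
        - (1 / b : ℝ) * n * Real.log n - (∫ ω, V ω * Real.log (V ω) ∂ℙ) * n)
      =o[atTop] fun n : ℕ => (n : ℝ) := by
  set c := s₀ + b * s₁
  have hmix := isLittleO_integral_mul_log_of_binomialMixture (ℙ := ℙ) hVmeas hV01 s₁
    (X := fun m => I (m + c)) (fun m => hImeas _) fun m k hk => by
      have h := hIdist (m + c) (Nat.le_add_left c m) k (by omega)
      rw [show m + c - s₀ - b * s₁ = m by omega, ← measureReal_def] at h
      simpa only [eval_bernsteinPolynomial] using h
  have hshift := (isLittleO_mul_log_add_sub_mul_log c).const_mul_left (1 / b : ℝ)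
  have hconst :
      (fun _ : ℕ => (c : ℝ) * ∫ ω, V ω * log (V ω) ∂ℙ) =o[atTop] fun m : ℕ => (m : ℝ) :=
    (isLittleO_const_id_atTop _).comp_tendsto tendsto_natCast_atTop_atTop
  rw [← map_add_atTop_eq_nat c, isLittleO_map]
  refine IsLittleO.trans_isBigO ?_ (isBigO_of_le (f := fun m : ℕ => (m : ℝ)) _ fun m => by
    simp [abs_of_nonneg (by positivity : (0 : ℝ) ≤ m + c)])
  refine ((hmix.sub hshift).sub hconst).congr_left fun m => ?_
  simp only [Function.comp_apply, hEV]
  push_cast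
  ring

/-- As `n → ∞`, `E[I_n · log I_n] = (1/b)·n·log n + E[V·log V]·n + o(n)`
for the subtree size `I n` of a random split tree with `n` balls (with `0·log 0 = 0`). -/
theorem stmt13
    (b s₀ s₁ : ℕ) (hb : 2 ≤ b)
    {Ω : Type*} [MeasurableSpace Ω] (ℙ : Measure Ω) [IsProbabilityMeasure ℙ]
    (V : Ω → ℝ) (hVmeas : Measurable V)
    (hV01 : ∀ ω, V ω ∈ Set.Icc (0:ℝ) 1)
    (hVdens : ℙ.map V ≪ (volume : Measure ℝ))
    (hVtail : ∀ x : ℝ, x < 1 → ℙ {ω | V ω ≤ x} < 1)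
    (hEV : (∫ ω, V ω ∂ℙ) = 1 / b)
    (I : ℕ → Ω → ℕ) (hImeas : ∀ n, Measurable (I n))
    (hIdist : ∀ n : ℕ, s₀ + b * s₁ ≤ n → ∀ k : ℕ, k ≤ n - s₀ - b * s₁ →
      (ℙ {ω | I n ω = k + s₁}).toReal
        = ∫ ω, ((n - s₀ - b * s₁).choose k : ℝ) * V ω ^ k
            * (1 - V ω) ^ (n - s₀ - b * s₁ - k) ∂ℙ) :
    (fun n : ℕ => (∫ ω, (I n ω : ℝ) * Real.log (I n ω) ∂ℙ)
        - (1 / b : ℝ) * n * Real.log n - (∫ ω, V ω * Real.log (V ω) ∂ℙ) * n)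
      =o[atTop] fun n : ℕ => (n : ℝ) :=
  stmt13_general b s₀ s₁ ℙ V hVmeas hV01 hEV I hImeas hIdist
end

section
/- For every x ∈ (0,1) one has x²·(1 − x + x² + (1−x)·√(x²+1)) < x. Consequently, if V is a random variable with values in [0,1] such that E[V] = 1/b and P(V ∈ {0,1}) = 0, then E[V²·(1 − V + V² + (1−V)·√(V²+1))] < 1/b. -/
open MeasureTheory Filter Topology Asymptotics

/-! Since `√(x² + 1) ≤ x + 1`, one has `λ(x) ≤ x²(2 - x) = x - x(1 - x)² ≤ x` on `[0, 1]`, with strict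
inequality on `(0, 1)`. As `V ∈ (0, 1)` almost surely, `λ(V) < V` almost surely, and integrating a
strict almost-everywhere inequality against a nonzero measure keeps it strict. -/

/-- The paper's `λ(v)`, the larger eigenvalue of `A_vᵀ A_v` for `A_v = [[v², v(1-v)], [0, v]]`. -/
noncomputable def splitLambda (v : ℝ) : ℝ :=
  v ^ 2 * (1 - v + v ^ 2 + (1 - v) * Real.sqrt (v ^ 2 + 1))

lemma continuous_splitLambda : Continuous splitLambda := by
  unfold splitLambda
  fun_prop

lemma splitLambda_nonneg {x : ℝ} (hx : x ∈ Set.Icc (0 : ℝ) 1) : 0 ≤ splitLambda x := by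
  have : 0 ≤ 1 - x := sub_nonneg.2 hx.2
  unfold splitLambda
  positivity

lemma splitLambda_le_sq_mul_two_sub {x : ℝ} (hx : x ∈ Set.Icc (0 : ℝ) 1) :
    splitLambda x ≤ x ^ 2 * (2 - x) := by
  have h1x : 0 ≤ 1 - x := sub_nonneg.2 hx.2
  have hsqrt : Real.sqrt (x ^ 2 + 1) ≤ x + 1 :=
    Real.sqrt_le_iff.2 ⟨by linarith [hx.1], by nlinarith [hx.1]⟩
  calc splitLambda x ≤ x ^ 2 * (1 - x + x ^ 2 + (1 - x) * (x + 1)) := by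
        unfold splitLambda; gcongr
    _ = x ^ 2 * (2 - x) := by ring

lemma splitLambda_le_self {x : ℝ} (hx : x ∈ Set.Icc (0 : ℝ) 1) : splitLambda x ≤ x :=
  calc splitLambda x ≤ x ^ 2 * (2 - x) := splitLambda_le_sq_mul_two_sub hx
    _ = x - x * (1 - x) ^ 2 := by ring
    _ ≤ x := sub_le_self _ (mul_nonneg hx.1 (sq_nonneg _))

lemma splitLambda_lt_self {x : ℝ} (hx : x ∈ Set.Ioo (0 : ℝ) 1) : splitLambda x < x :=
  calc splitLambda x ≤ x ^ 2 * (2 - x) := splitLambda_le_sq_mul_two_sub (Set.Ioo_subset_Icc_self hx)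
    _ = x - x * (1 - x) ^ 2 := by ring
    _ < x := sub_lt_self _ (mul_pos hx.1 (pow_pos (sub_pos.2 hx.2) 2))

lemma MeasureTheory.integral_lt_integral_of_ae_lt {α : Type*} [MeasurableSpace α] {μ : Measure α}
    [NeZero μ] {f g : α → ℝ} (hf : Integrable f μ) (hg : Integrable g μ)
    (hlt : ∀ᵐ x ∂μ, f x < g x) : ∫ x, f x ∂μ < ∫ x, g x ∂μ := by
  have hsupp : ∀ᵐ x ∂μ, x ∈ Function.support fun x => g x - f x :=
    hlt.mono fun x hx => sub_ne_zero.2 hx.ne'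
  have hpos : 0 < ∫ x, g x - f x ∂μ := by
    rw [integral_pos_iff_support_of_nonneg_ae (hlt.mono fun x hx => sub_nonneg.2 hx.le) (hg.sub hf)]
    refine pos_iff_ne_zero.2 fun h0 => ?_
    obtain ⟨x, hx, hx'⟩ := (hsupp.and (measure_eq_zero_iff_ae_notMem.1 h0)).exists
    exact hx' hx
  rw [integral_sub hg hf] at hpos
  linarith

theorem stmt18_general (b : ℕ) :
    (∀ x ∈ Set.Ioo (0:ℝ) 1,
        x ^ 2 * (1 - x + x ^ 2 + (1 - x) * Real.sqrt (x ^ 2 + 1)) < x)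
    ∧ ∀ (Ω : Type) (mΩ : MeasurableSpace Ω) (ℙ : @Measure Ω mΩ),
        IsProbabilityMeasure ℙ →
        ∀ V : Ω → ℝ, Measurable V → (∀ ω, V ω ∈ Set.Icc (0:ℝ) 1) →
        (∫ ω, V ω ∂ℙ) = 1 / (b:ℝ) →
        ℙ {ω | V ω = 0 ∨ V ω = 1} = 0 →
        (∫ ω, (V ω) ^ 2 * (1 - V ω + (V ω) ^ 2
            + (1 - V ω) * Real.sqrt ((V ω) ^ 2 + 1)) ∂ℙ) < 1 / (b:ℝ) := by
  refine ⟨fun x hx => splitLambda_lt_self hx, ?_⟩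
  intro Ω _ ℙ _ V hV hV01 hmean hends
  have hVint : Integrable V ℙ :=
    .of_bound hV.aestronglyMeasurable 1 (ae_of_all _ fun ω => by
      rw [Real.norm_of_nonneg (hV01 ω).1]; exact (hV01 ω).2)
  have hLint : Integrable (fun ω => splitLambda (V ω)) ℙ :=
    hVint.mono' (continuous_splitLambda.measurable.comp hV).aestronglyMeasurable
      (ae_of_all _ fun ω => by
        rw [Real.norm_of_nonneg (splitLambda_nonneg (hV01 ω))]; exact splitLambda_le_self (hV01 ω))
  have hinterior : ∀ᵐ ω ∂ℙ, V ω ∈ Set.Ioo (0 : ℝ) 1 :=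
    (measure_eq_zero_iff_ae_notMem.1 hends).mono fun ω hω => by
      simp only [Set.mem_ofPred_eq, not_or] at hω
      exact ⟨(hV01 ω).1.lt_of_ne' hω.1, (hV01 ω).2.lt_of_ne hω.2⟩
  rw [← hmean]
  exact integral_lt_integral_of_ae_lt hLint hVint (hinterior.mono fun ω => splitLambda_lt_self)

/-- For every `x ∈ (0,1)` one has
`x²·(1 - x + x² + (1-x)·√(x²+1)) < x` (the left-hand side is the larger eigenvalue of
`(A_x)ᵀ A_x` for `A_x = [[x², x(1-x)], [0, x]]`). Consequently, if `V` is a random variable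
with values in `[0,1]`, `E[V] = 1/b` and `P(V ∈ {0,1}) = 0`, then
`E[V²·(1 - V + V² + (1-V)·√(V²+1))] < 1/b`. -/
theorem stmt18 (b : ℕ) (hb : 2 ≤ b) :
    (∀ x ∈ Set.Ioo (0:ℝ) 1,
        x ^ 2 * (1 - x + x ^ 2 + (1 - x) * Real.sqrt (x ^ 2 + 1)) < x)
    ∧ ∀ (Ω : Type) (mΩ : MeasurableSpace Ω) (ℙ : @Measure Ω mΩ),
        IsProbabilityMeasure ℙ →
        ∀ V : Ω → ℝ, Measurable V → (∀ ω, V ω ∈ Set.Icc (0:ℝ) 1) →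
        (∫ ω, V ω ∂ℙ) = 1 / (b:ℝ) →
        ℙ {ω | V ω = 0 ∨ V ω = 1} = 0 →
        (∫ ω, (V ω) ^ 2 * (1 - V ω + (V ω) ^ 2
            + (1 - V ω) * Real.sqrt ((V ω) ^ 2 + 1)) ∂ℙ) < 1 / (b:ℝ) :=
  stmt18_general b
end
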